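/- arXiv:1508.02662 — 6 statements merged into one kernel-verified Lean document; each statement's English description precedes it below -/
import Mathlib

section
/- If G is an infinite abelian group and A ⊆ G satisfies hA ∼ G (the h-fold sumset of A contains all but finitely many elements of G), then (h+1)A = G. -/
open Pointwise

/-- `itSum A n` is the `n`-fold sumset of `A` (sums of exactly `n` elements of `A`). -/
def itSum {G : Type*} [AddCommGroup G] (A : Set G) : ℕ → Set G
  | 0 => {0}
  | n + 1 => itSum A n + A

/-- `SimEq A B` means the symmetric difference of `A` and `B` is finite. -/
def SimEq {G : Type*} [AddCommGroup G] (A B : Set G) : Prop :=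
  (symmDiff A B).Finite

lemma itSum_finite {G : Type*} [AddCommGroup G] {A : Set G} (hA : A.Finite) :
    ∀ n, (itSum A n).Finite
  | 0 => Set.finite_singleton 0
  | n + 1 => (itSum_finite hA n).add hA

theorem stmt_0 {G : Type*} [AddCommGroup G] [Infinite G] (A : Set G) (h : ℕ)
    (hh : 1 ≤ h) (hA : SimEq (itSum A h) Set.univ) :
    itSum A (h + 1) = Set.univ := by
  have hcompl : (itSum A h)ᶜ.Finite := by
    have := hA
    unfold SimEq at this
    simpa [symmDiff_def, Set.compl_eq_univ_diff] using this
  have hAinf : A.Infinite := by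
    intro hfin
    have h1 : (itSum A h).Finite := itSum_finite hfin h
    have : (Set.univ : Set G).Finite := by
      have := h1.union hcompl
      simpa [Set.union_compl_self] using this
    exact Set.infinite_univ this
  ext g
  simp only [Set.mem_univ, iff_true]
  show g ∈ itSum A h + A
  have himg : ((fun a => g - a) '' A).Infinite :=
    hAinf.image (fun x _ y _ hxy => sub_right_injective hxy)
  obtain ⟨x, hx, hx2⟩ := ((himg.diff hcompl).nonempty)
  obtain ⟨a, ha, rfl⟩ := hx
  simp only [Set.mem_compl_iff, not_not] at hx2
  exact ⟨g - a, hx2, a, ha, by simp⟩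
end

section
/- Let G be an infinite abelian group and A ⊆ G a weak basis (i.e., ⋃_{i=1}^h iA ∼ G for some positive integer h). Then A is a basis of G (i.e., kA ∼ G for some positive integer k) if and only if the subgroup generated by A − A equals G. -/
open Pointwise

/-!
If `kA` is cofinite in the infinite group `G`, then `kA - kA = G`, and `kA - kA` lies in the
subgroup generated by `A - A`. Conversely, if `A - A` generates `G`, some `a ∈ A` is a difference
`x - y` of two `m`-fold sums, so `x` lies in both `mA` and `(m+1)A`. Then `(h-1)x` lies in
`((h-1)m + t)A` for every `t ≤ h - 1`, so translating the cofinite set `⋃_{1 ≤ i ≤ h} iA` by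
`(h-1)x` lands inside `((h-1)m + h)A`.
-/

open Set Filter

section

variable {G : Type*} [AddCommGroup G]

lemma itSum_eq_nsmul (A : Set G) (n : ℕ) : itSum A n = n • A := by
  induction n with
  | zero => rfl
  | succ n ih => rw [itSum, ih, succ_nsmul]

lemma simEq_univ_iff {X : Set G} : SimEq X univ ↔ Xᶜ.Finite := by
  rw [SimEq, ← top_eq_univ, symmDiff_top, hnot_eq_compl]

lemma sub_self_eq_univ_of_finite_compl [Infinite G] {X : Set G} (hX : Xᶜ.Finite) :
    X - X = univ := by
  have hX' : ∀ᶠ y in cofinite, y ∈ X := hX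
  refine eq_univ_of_forall fun g => ?_
  obtain ⟨y, hy, hgy⟩ :=
    (hX'.and ((add_right_injective g).tendsto_cofinite.eventually hX')).exists
  exact ⟨g + y, hgy, y, hy, add_sub_cancel_right g y⟩

lemma nsmul_sub_nsmul_subset_closure (A : Set G) (n : ℕ) :
    n • A - n • A ⊆ AddSubgroup.closure (A - A) := by
  rw [← nsmul_sub]
  exact AddSubgroup.nsmul_subset AddSubgroup.subset_closure

lemma exists_mem_nsmul_sub_nsmul_of_mem_closure {A : Set G} {g : G}
    (hg : g ∈ AddSubgroup.closure (A - A)) : ∃ m : ℕ, g ∈ m • A - m • A := by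
  induction hg using AddSubgroup.closure_induction with
  | mem g hg => exact ⟨1, by rwa [one_nsmul]⟩
  | zero => exact ⟨0, 0, rfl, 0, rfl, sub_zero 0⟩
  | add g g' _ _ hg hg' =>
    obtain ⟨m, x, hx, y, hy, rfl⟩ := hg
    obtain ⟨m', x', hx', y', hy', rfl⟩ := hg'
    refine ⟨m + m', x + x', ?_, y + y', ?_, add_sub_add_comm x x' y y'⟩ <;>
      rw [add_nsmul] <;> exact add_mem_add ‹_› ‹_›
  | neg g _ hg =>
    obtain ⟨m, x, hx, y, hy, rfl⟩ := hg
    exact ⟨m, y, hy, x, hx, (neg_sub x y).symm⟩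

lemma nsmul_mem_nsmul_add_of_mem_nsmul_of_mem_succ_nsmul {A : Set G} {x : G} {m : ℕ}
    (hx : x ∈ m • A) (hx' : x ∈ (m + 1) • A) {n t : ℕ} (ht : t ≤ n) :
    n • x ∈ (n * m + t) • A := by
  have hsplit : n * m + t = (n - t) * m + t * (m + 1) := by
    rw [Nat.sub_mul, mul_add_one]; have := Nat.mul_le_mul_right m ht; omega
  have hx_split : n • x = (n - t) • x + t • x := by rw [← add_nsmul, Nat.sub_add_cancel ht]
  rw [hx_split, hsplit, add_nsmul, mul_nsmul', mul_nsmul']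
  exact add_mem_add (nsmul_mem_nsmul hx) (nsmul_mem_nsmul hx')

lemma exists_mem_nsmul_inter_succ_nsmul {A : Set G} (hA : A.Nonempty)
    (hcl : AddSubgroup.closure (A - A) = ⊤) :
    ∃ (m : ℕ) (x : G), x ∈ m • A ∧ x ∈ (m + 1) • A := by
  obtain ⟨a, ha⟩ := hA
  obtain ⟨m, x, hx, y, hy, hxy : x - y = a⟩ :=
    exists_mem_nsmul_sub_nsmul_of_mem_closure (hcl ▸ AddSubgroup.mem_top a)
  refine ⟨m, x, hx, ?_⟩
  rw [succ_nsmul', ← sub_add_cancel x y, hxy]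
  exact add_mem_add ha hy

lemma finite_compl_nsmul_of_finite_compl_iUnion_nsmul {A : Set G} {h m : ℕ} {x : G}
    (hx : x ∈ m • A) (hx' : x ∈ (m + 1) • A)
    (hS : (⋃ i ∈ Finset.Icc 1 h, i • A)ᶜ.Finite) :
    (((h - 1) * m + h) • A)ᶜ.Finite := by
  refine (hS.preimage (sub_left_injective (b := (h - 1) • x)).injOn).subset
    fun z hz hzS => hz ?_
  obtain ⟨i, hi, hzi⟩ : ∃ i ∈ Finset.Icc 1 h, z - (h - 1) • x ∈ i • A := by simpa using hzS
  rw [Finset.mem_Icc] at hi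
  have hw := nsmul_mem_nsmul_add_of_mem_nsmul_of_mem_succ_nsmul hx hx' (n := h - 1) (t := h - i)
    (by omega)
  rw [← sub_add_cancel z ((h - 1) • x),
    show (h - 1) * m + h = i + ((h - 1) * m + (h - i)) by omega, add_nsmul]
  exact add_mem_add hzi hw

end

theorem stmt_3_general {G : Type*} [AddCommGroup G] [Infinite G] (A : Set G) (h : ℕ)
    (hA : SimEq (⋃ i ∈ Finset.Icc 1 h, itSum A i) Set.univ) :
    (∃ k, 1 ≤ k ∧ SimEq (itSum A k) Set.univ) ↔
      AddSubgroup.closure (A - A) = ⊤ := by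
  simp_rw [itSum_eq_nsmul, simEq_univ_iff] at hA ⊢
  constructor
  · rintro ⟨k, -, hk⟩
    refine eq_top_iff.2 fun g _ => nsmul_sub_nsmul_subset_closure A k ?_
    rw [sub_self_eq_univ_of_finite_compl hk]
    trivial
  · intro hcl
    obtain ⟨s, hs⟩ := hA.infinite_compl.nonempty
    obtain ⟨i, hi, hsi⟩ : ∃ i ∈ Finset.Icc 1 h, s ∈ i • A := by simpa using hs
    rw [Finset.mem_Icc] at hi
    have hAne : A.Nonempty := nonempty_iff_ne_empty.2 fun hA0 => by
      rw [hA0, nsmul_empty (by omega)] at hsi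
      exact hsi
    obtain ⟨m, x, hx, hx'⟩ := exists_mem_nsmul_inter_succ_nsmul hAne hcl
    exact ⟨(h - 1) * m + h, by omega, finite_compl_nsmul_of_finite_compl_iUnion_nsmul hx hx' hA⟩

theorem stmt_3 {G : Type*} [AddCommGroup G] [Infinite G] (A : Set G) (h : ℕ)
    (hh : 1 ≤ h) (hA : SimEq (⋃ i ∈ Finset.Icc 1 h, itSum A i) Set.univ) :
    (∃ k, 1 ≤ k ∧ SimEq (itSum A k) Set.univ) ↔
      AddSubgroup.closure (A - A) = ⊤ :=
  stmt_3_general A h hA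
end

section
/- Let p be prime and G an infinite abelian group with px = 0 for all x ∈ G. If h ≥ p and A ⊆ G satisfies ⋃_{i=1}^h iA ∼ G and ⟨A − A⟩ = G, then kA ∼ G for some k ≤ ph + p − 1. -/
open Pointwise

theorem itSum_zero {G : Type*} [AddCommGroup G] (A : Set G) : itSum A 0 = {0} := rfl

theorem itSum_succ {G : Type*} [AddCommGroup G] (A : Set G) (n : ℕ) :
    itSum A (n + 1) = itSum A n + A := rfl

theorem mem_itSum_one {G : Type*} [AddCommGroup G] {A : Set G} {a : G} (ha : a ∈ A) :
    a ∈ itSum A 1 := by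
  rw [itSum_succ, itSum_zero]
  exact Set.mem_add.mpr ⟨0, rfl, a, ha, zero_add a⟩

theorem add_mem_itSum {G : Type*} [AddCommGroup G] {A : Set G} {x y : G} {m n : ℕ}
    (hx : x ∈ itSum A m) (hy : y ∈ itSum A n) : x + y ∈ itSum A (m + n) := by
  induction n generalizing y with
  | zero =>
    rw [itSum_zero, Set.mem_singleton_iff] at hy
    subst hy
    simpa using hx
  | succ n ih =>
    rw [itSum_succ] at hy
    rcases Set.mem_add.mp hy with ⟨u, hu, a, ha, hua⟩
    rw [show m + (n + 1) = (m + n) + 1 from rfl, itSum_succ]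
    exact Set.mem_add.mpr ⟨x + u, ih hu, a, ha, by rw [add_assoc, hua]⟩

theorem nsmul_mem_itSum {G : Type*} [AddCommGroup G] {A : Set G} {y : G} {m : ℕ}
    (hy : y ∈ itSum A m) (t : ℕ) : t • y ∈ itSum A (t * m) := by
  induction t with
  | zero => rw [zero_nsmul, Nat.zero_mul, itSum_zero]; exact rfl
  | succ t ih =>
    rw [succ_nsmul, show (t + 1) * m = t * m + m from by ring]
    exact add_mem_itSum ih hy

theorem nsmul_self_mem_itSum {G : Type*} [AddCommGroup G] {A : Set G} {a : G} (ha : a ∈ A)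
    (n : ℕ) : n • a ∈ itSum A n := by
  induction n with
  | zero => rw [zero_nsmul, itSum_zero]; exact rfl
  | succ n ih =>
    rw [succ_nsmul]
    exact add_mem_itSum ih (mem_itSum_one ha)

theorem stmt_14 {G : Type*} [AddCommGroup G] [Infinite G] (p : ℕ) (hp : p.Prime)
    (htor : ∀ x : G, p • x = 0) (h : ℕ) (hh : p ≤ h) (A : Set G)
    (hA : SimEq (⋃ i ∈ Finset.Icc 1 h, itSum A i) Set.univ)
    (hgen : AddSubgroup.closure (A - A) = ⊤) :
    ∃ k, 1 ≤ k ∧ k ≤ p * h + p - 1 ∧ SimEq (itSum A k) Set.univ := by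
  classical
  haveI : Fact p.Prime := ⟨hp⟩
  haveI : NeZero p := ⟨hp.pos.ne'⟩
  haveI : Fact (1 < p) := ⟨hp.one_lt⟩
  have hp2 : 2 ≤ p := hp.two_le
  have hh1 : 1 ≤ h := by omega
  set U : Set G := ⋃ i ∈ Finset.Icc 1 h, itSum A i with hUdef
  have hE : (Uᶜ).Finite := by
    have h0 : (symmDiff U Set.univ).Finite := hA
    rwa [← Set.top_eq_univ, symmDiff_top] at h0
  have hwin : ∀ y : G, y ∉ Uᶜ → ∃ ℓ, 1 ≤ ℓ ∧ ℓ ≤ h ∧ y ∈ itSum A ℓ := by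
    intro y hy
    have hyU : y ∈ U := Set.notMem_compl_iff.mp hy
    rw [hUdef] at hyU
    rcases Set.mem_iUnion₂.mp hyU with ⟨i, hi, hmem⟩
    rcases Finset.mem_Icc.mp hi with ⟨h1, h2⟩
    exact ⟨i, h1, h2, hmem⟩
  obtain ⟨a₀, ha₀⟩ : A.Nonempty := by
    obtain ⟨y, hy⟩ := hE.infinite_compl.nonempty
    have hy' : y ∉ Uᶜ := by simpa using hy
    obtain ⟨ℓ, h1, _, hmem⟩ := hwin y hy'
    cases ℓ with
    | zero => omega
    | succ n =>
      rw [itSum_succ] at hmem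
      rcases Set.mem_add.mp hmem with ⟨u, _, a, ha, _⟩
      exact ⟨a, ha⟩
  have hzerop : (0 : G) ∈ itSum A p := by
    have := nsmul_self_mem_itSum ha₀ p
    rwa [htor a₀] at this
  have hzero : ∀ c : ℕ, (0 : G) ∈ itSum A (c * p) := by
    intro c
    induction c with
    | zero => rw [Nat.zero_mul, itSum_zero]; exact rfl
    | succ c ih =>
      have h5 := add_mem_itSum ih hzerop
      rw [add_zero] at h5
      rwa [show c * p + p = (c + 1) * p from by ring] at h5
  have hK1 : 1 ≤ p * h + p - 1 := by
    have : p ≤ p * h := Nat.le_mul_of_pos_right p (by omega)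
    omega
  by_cases hcase : ∃ (y : G) (ℓ₁ ℓ₂ : ℕ), ℓ₁ ≤ h + 1 ∧ ℓ₂ ≤ h + 1 ∧
      y ∈ itSum A ℓ₁ ∧ y ∈ itSum A ℓ₂ ∧ ((ℓ₁ : ZMod p) ≠ (ℓ₂ : ZMod p))
  · obtain ⟨y₀, ℓ₁, ℓ₂, hℓ₁, hℓ₂, hm₁, hm₂, hne⟩ := hcase
    refine ⟨p * h + p - 1, hK1, le_refl _, ?_⟩
    have hδ : ((ℓ₂ : ZMod p) - (ℓ₁ : ZMod p)) ≠ 0 := sub_ne_zero.mpr hne.symm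
    have main : ∀ x : G, x - (p - 1) • y₀ ∉ Uᶜ → x ∈ itSum A (p * h + p - 1) := by
      intro x hz
      obtain ⟨w, hw1, hwh, hwmem⟩ := hwin _ hz
      set tz : ZMod p := ((ℓ₂ : ZMod p) - (ℓ₁ : ZMod p))⁻¹ *
        (((p * h + p - 1 : ℕ) : ZMod p) - (w : ZMod p) + (ℓ₁ : ZMod p)) with htzdef
      set t : ℕ := tz.val with htdef
      have htp : t < p := ZMod.val_lt tz
      have hval : ((t : ℕ) : ZMod p) = tz := ZMod.natCast_rightInverse tz
      have hx1 : t • y₀ ∈ itSum A (t * ℓ₂) := nsmul_mem_itSum hm₂ t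
      have hx2 : (p - 1 - t) • y₀ ∈ itSum A ((p - 1 - t) * ℓ₁) := nsmul_mem_itSum hm₁ _
      have hcomb : t • y₀ + (p - 1 - t) • y₀ = (p - 1) • y₀ := by
        rw [← add_nsmul, show t + (p - 1 - t) = p - 1 from by omega]
      have hN : x ∈ itSum A (w + (t * ℓ₂ + (p - 1 - t) * ℓ₁)) := by
        have h5 := add_mem_itSum hwmem (add_mem_itSum hx1 hx2)
        rwa [show x - (p - 1) • y₀ + (t • y₀ + (p - 1 - t) • y₀) = x from by
          rw [hcomb]; exact sub_add_cancel x _] at h5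
      set N : ℕ := w + (t * ℓ₂ + (p - 1 - t) * ℓ₁) with hNdef
      have b4 : h + (p - 1) * (h + 1) = p * h + p - 1 := by
        obtain ⟨q, rfl⟩ : ∃ q, p = q + 1 := ⟨p - 1, by omega⟩
        rw [Nat.add_sub_assoc (by omega : 1 ≤ q + 1)]
        simp only [Nat.add_sub_cancel]
        ring
      have hNK : N ≤ p * h + p - 1 := by
        have b1 : t * ℓ₂ ≤ t * (h + 1) := Nat.mul_le_mul_left t hℓ₂
        have b2 : (p - 1 - t) * ℓ₁ ≤ (p - 1 - t) * (h + 1) := Nat.mul_le_mul_left _ hℓ₁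
        have b3 : t * (h + 1) + (p - 1 - t) * (h + 1) = (p - 1) * (h + 1) := by
          rw [← add_mul, show t + (p - 1 - t) = p - 1 from by omega]
        calc N ≤ h + (t * (h + 1) + (p - 1 - t) * (h + 1)) :=
              Nat.add_le_add hwh (Nat.add_le_add b1 b2)
          _ = h + (p - 1) * (h + 1) := by rw [b3]
          _ = p * h + p - 1 := b4
      have hcast : ((p - 1 - t : ℕ) : ZMod p) = -1 - tz := by
        rw [Nat.cast_sub (by omega : t ≤ p - 1), Nat.cast_sub (by omega : 1 ≤ p),
          ZMod.natCast_self, hval]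
        push_cast
        ring
      have hTmul : tz * ((ℓ₂ : ZMod p) - (ℓ₁ : ZMod p)) =
          ((p * h + p - 1 : ℕ) : ZMod p) - (w : ZMod p) + (ℓ₁ : ZMod p) := by
        rw [htzdef, mul_comm, ← mul_assoc, mul_inv_cancel₀ hδ, one_mul]
      have hmod : ((N : ℕ) : ZMod p) = ((p * h + p - 1 : ℕ) : ZMod p) := by
        have hsplit : ((N : ℕ) : ZMod p) = (w : ZMod p) + (t : ZMod p) * (ℓ₂ : ZMod p) +
            ((p - 1 - t : ℕ) : ZMod p) * (ℓ₁ : ZMod p) := by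
          rw [hNdef]; push_cast; ring
        rw [hsplit, hcast, hval]
        have expand : (w : ZMod p) + tz * (ℓ₂ : ZMod p) + (-1 - tz) * (ℓ₁ : ZMod p) =
            (w : ZMod p) - (ℓ₁ : ZMod p) + tz * ((ℓ₂ : ZMod p) - (ℓ₁ : ZMod p)) := by ring
        rw [expand, hTmul]
        ring
      have hNmod : N ≡ p * h + p - 1 [MOD p] := (ZMod.natCast_eq_natCast_iff _ _ _).mp hmod
      obtain ⟨c, hc⟩ := (Nat.modEq_iff_dvd' hNK).mp hNmod
      have hfin : x ∈ itSum A (N + c * p) := by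
        have h6 := add_mem_itSum hN (hzero c)
        rwa [add_zero] at h6
      have hNc : N + c * p = p * h + p - 1 := by
        have h7 := Nat.add_sub_cancel' hNK
        rw [hc] at h7
        rw [← h7]
        ring
      rwa [hNc] at hfin
    have hsub : (itSum A (p * h + p - 1))ᶜ ⊆ (fun z => z + (p - 1) • y₀) '' Uᶜ := by
      intro x hx
      by_contra himg
      refine hx (main x ?_)
      intro hzc
      exact himg ⟨x - (p - 1) • y₀, hzc, sub_add_cancel x _⟩
    show (symmDiff (itSum A (p * h + p - 1)) Set.univ).Finite
    rw [← Set.top_eq_univ, symmDiff_top]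
    exact (hE.image _).subset hsub
  · exfalso
    push_neg at hcase
    set lam : G → ZMod p := fun y =>
      if hy : ∃ ℓ, ℓ ≤ h + 1 ∧ y ∈ itSum A ℓ then ((hy.choose : ℕ) : ZMod p) else 0
      with hlamdef
    have lam_spec : ∀ (y : G) (ℓ : ℕ), ℓ ≤ h + 1 → y ∈ itSum A ℓ → lam y = (ℓ : ZMod p) := by
      intro y ℓ hle hmem
      have hy : ∃ ℓ, ℓ ≤ h + 1 ∧ y ∈ itSum A ℓ := ⟨ℓ, hle, hmem⟩
      simp only [hlamdef]
      rw [dif_pos hy]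
      exact hcase y hy.choose ℓ hy.choose_spec.1 hle hy.choose_spec.2 hmem
    have step : ∀ y : G, y ∉ Uᶜ → ∀ a ∈ A, lam (y + a) = lam y + 1 := by
      intro y hy a ha
      obtain ⟨w, hw1, hwh, hmem⟩ := hwin y hy
      have h1 : lam y = (w : ZMod p) := lam_spec y w (by omega) hmem
      have h2 : y + a ∈ itSum A (w + 1) := add_mem_itSum hmem (mem_itSum_one ha)
      have h3 : lam (y + a) = ((w + 1 : ℕ) : ZMod p) := lam_spec _ _ (by omega) h2
      rw [h1, h3]
      push_cast
      ring
    let S : AddSubgroup G := {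
      carrier := {g : G | ∃ F : Set G, F.Finite ∧ ∀ y ∉ F, lam (y + g) = lam y}
      zero_mem' := ⟨∅, Set.finite_empty, fun y _ => by rw [add_zero]⟩
      add_mem' := by
        rintro g₁ g₂ ⟨F₁, hF₁, h₁⟩ ⟨F₂, hF₂, h₂⟩
        refine ⟨F₁ ∪ (fun z => z + g₁) ⁻¹' F₂,
          hF₁.union (hF₂.preimage (add_left_injective g₁).injOn), ?_⟩
        intro y hy
        rw [Set.mem_union] at hy
        push_neg at hy
        have e1 : y + (g₁ + g₂) = (y + g₁) + g₂ := by rw [add_assoc]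
        rw [e1, h₂ _ hy.2, h₁ _ hy.1]
      neg_mem' := by
        rintro g ⟨F, hF, hF'⟩
        refine ⟨(fun z => z + -g) ⁻¹' F, hF.preimage (add_left_injective _).injOn, ?_⟩
        intro y hy
        have h8 := hF' (y + -g) hy
        rw [show y + -g + g = y from by abel] at h8
        exact h8.symm }
    have hgens : A - A ⊆ (S : Set G) := by
      rintro d hd
      rcases Set.mem_sub.mp hd with ⟨a, ha, b, hb, rfl⟩
      refine ⟨Uᶜ ∪ ⋃ k ∈ Finset.range p, (fun z => z + (a + k • b)) ⁻¹' Uᶜ, ?_, ?_⟩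
      · exact hE.union (Set.Finite.biUnion (Finset.range p).finite_toSet
          (fun k _ => hE.preimage (add_left_injective _).injOn))
      · intro y hy
        rw [Set.mem_union] at hy
        push_neg at hy
        obtain ⟨hy0, hyk'⟩ := hy
        have hyk : ∀ k, k < p → y + (a + k • b) ∉ Uᶜ := by
          intro k hk hc
          exact hyk' (Set.mem_iUnion₂.mpr ⟨k, Finset.mem_range.mpr hk, hc⟩)
        have chain : ∀ k : ℕ, k < p → lam (y + a + k • b) = lam y + 1 + (k : ZMod p) := by
          intro k
          induction k with
          | zero =>
            intro _
            rw [zero_nsmul, add_zero, step y hy0 a ha]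
            push_cast
            ring
          | succ k ih =>
            intro hk
            have hk' : k < p := by omega
            have hke := ih hk'
            have hpt : y + a + k • b ∉ Uᶜ := by
              have h9 := hyk k hk'
              rwa [← add_assoc] at h9
            rw [succ_nsmul, ← add_assoc, step _ hpt b hb, hke]
            push_cast
            ring
        have hfin := chain (p - 1) (by omega)
        have hpb : (p - 1) • b = -b := by
          have h9 : (p - 1) • b + b = 0 := by
            rw [← succ_nsmul, show p - 1 + 1 = p from by omega]
            exact htor b
          exact eq_neg_of_add_eq_zero_left h9
        have hcast1 : ((p - 1 : ℕ) : ZMod p) = -1 := by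
          rw [Nat.cast_sub (by omega : 1 ≤ p), ZMod.natCast_self]
          push_cast
          ring
        rw [hpb] at hfin
        rw [show y + (a - b) = y + a + -b from by abel, hfin, hcast1]
        ring
    have hStop : ∀ g : G, g ∈ S := by
      intro g
      have hg : g ∈ AddSubgroup.closure (A - A) := by
        rw [hgen]; exact AddSubgroup.mem_top g
      exact (AddSubgroup.closure_le S).mpr hgens hg
    obtain ⟨F, hF, hFeq⟩ := hStop a₀
    obtain ⟨y, hy⟩ := (hF.union hE).infinite_compl.nonempty
    rw [Set.mem_compl_iff, Set.mem_union] at hy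
    push_neg at hy
    have h1 := step y hy.2 a₀ ha₀
    have h2 := hFeq y hy.1
    rw [h1] at h2
    have h3 : (1 : ZMod p) = 0 := add_left_cancel (h2.trans (add_zero (lam y)).symm)
    exact one_ne_zero h3
end

section
/- Let e_1, …, e_d be linearly independent in 𝔽_p^d and A = {e_1, …, e_d, α_1e_1 + ⋯ + α_de_d}. Then there exists k with kA = 𝔽_p^d (A is a nice basis) if and only if α_1 + ⋯ + α_d ≢ 1 (mod p). If this holds, then d(p−1)A = 𝔽_p^d and (d(p−1)−1)A ≠ 𝔽_p^d. -/
open Pointwise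

/-!
Transporting along the basis `e`, we may take `e` to be the standard basis `δ`, so that
`A = {δ i} ∪ {α}` and `kA` consists of the vectors `f + m α` with `f : ι → ℕ`, `m : ℕ` and
`∑ f + m = k`. The coordinate sum of such a vector is `k + m (s - 1)`, where `s = ∑ α i`.
If `s = 1` it always equals `k`, so `kA` cannot contain both `0` and `δ i`. If `s ≠ 1`, the
coordinate sum of `x` determines `m` modulo `p`; the reduced representatives `f i < p` then
cost at most `d (p - 1)`, and padding `m` by a multiple of `p` reaches any larger `k`.
The vector `-1 - α` forces `m ≡ -1` and every `f i ≡ -1`, so it costs at least `d (p - 1)`.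
-/

section AddCommGroup

variable {G H : Type*} [AddCommGroup G] [AddCommGroup H]

lemma itSum_image {F : Type*} [FunLike F G H] [AddMonoidHomClass F G H] (f : F) (A : Set G) :
    ∀ k, itSum (f '' A) k = f '' itSum A k
  | 0 => by simp [itSum]
  | k + 1 => by rw [itSum, itSum, itSum_image f A k, Set.image_add]

lemma itSum_image_eq_univ_iff (L : G ≃+ H) (A : Set G) (k : ℕ) :
    itSum (L '' A) k = Set.univ ↔ itSum A k = Set.univ := by
  rw [itSum_image, ← Set.image_univ_of_surjective L.surjective,
    (Set.image_injective.mpr L.injective).eq_iff]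

variable {ι : Type*} [Fintype ι] [DecidableEq ι]

lemma sum_add_single_one (f : ι → ℕ) (j : ι) :
    ∑ i, (f + Pi.single j 1 : ι → ℕ) i = ∑ i, f i + 1 := by
  simp [Finset.sum_add_distrib]

lemma sum_add_single_one_nsmul (f : ι → ℕ) (j : ι) (e : ι → G) :
    ∑ i, (f + Pi.single j 1 : ι → ℕ) i • e i = ∑ i, f i • e i + e j := by
  simp [add_smul, Finset.sum_add_distrib, Pi.single_apply, ite_smul]

lemma exists_eq_add_single_one {f : ι → ℕ} (hf : ∑ i, f i ≠ 0) :
    ∃ g : ι → ℕ, ∃ j, f = g + Pi.single j 1 := by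
  obtain ⟨j, -, hj⟩ := Finset.exists_ne_zero_of_sum_ne_zero hf
  refine ⟨Function.update f j (f j - 1), j, funext fun i => ?_⟩
  rcases eq_or_ne i j with rfl | hij
  · simp only [Pi.add_apply, Function.update_self, Pi.single_eq_same]
    omega
  · simp [hij]

lemma mem_itSum_range_union_singleton (e : ι → G) (v x : G) (k : ℕ) :
    x ∈ itSum (Set.range e ∪ {v}) k ↔
      ∃ f : ι → ℕ, ∃ m : ℕ, ∑ i, f i + m = k ∧ ∑ i, f i • e i + m • v = x := by
  induction k generalizing x with
  | zero =>
    simp only [itSum, Nat.add_eq_zero_iff, Finset.sum_eq_zero_iff, Finset.mem_univ, true_implies]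
    constructor
    · rintro rfl
      exact ⟨0, 0, ⟨fun _ => rfl, rfl⟩, by simp⟩
    · rintro ⟨f, m, ⟨hf, rfl⟩, rfl⟩
      simp [hf]
  | succ k ih =>
    simp only [itSum, Set.mem_add, ih, Set.mem_union, Set.mem_range, Set.mem_singleton_iff]
    constructor
    · rintro ⟨_, ⟨f, m, hk, rfl⟩, _, ⟨j, rfl⟩ | rfl, rfl⟩
      · refine ⟨f + Pi.single j 1, m, ?_, ?_⟩
        · rw [sum_add_single_one]
          omega
        · rw [sum_add_single_one_nsmul]
          abel
      · exact ⟨f, m + 1, by omega, by rw [succ_nsmul]; abel⟩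
    · rintro ⟨f, m | m, hk, rfl⟩
      · obtain ⟨g, j, rfl⟩ := exists_eq_add_single_one (f := f) (by omega)
        rw [sum_add_single_one] at hk
        exact ⟨_, ⟨g, 0, by omega, rfl⟩, e j, Or.inl ⟨j, rfl⟩, by
          rw [sum_add_single_one_nsmul]; abel⟩
      · exact ⟨_, ⟨f, m, by omega, rfl⟩, v, Or.inr rfl, by rw [succ_nsmul]; abel⟩

end AddCommGroup

lemma le_of_natCast_eq_neg_one {p : ℕ} [NeZero p] {n : ℕ} (h : (n : ZMod p) = -1) :
    p - 1 ≤ n := by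
  have hdvd : p ∣ n + 1 := by
    rw [← ZMod.natCast_eq_zero_iff, Nat.cast_add, h, Nat.cast_one, neg_add_cancel]
  have := Nat.le_of_dvd n.succ_pos hdvd
  omega

lemma natCast_sub_one_eq_neg_one {p : ℕ} [NeZero p] : ((p - 1 : ℕ) : ZMod p) = -1 := by
  rw [Nat.cast_sub NeZero.one_le, ZMod.natCast_self, Nat.cast_one, zero_sub]

section Coordinates

variable {p : ℕ} [Fact p.Prime] {ι : Type*} [Fintype ι] [DecidableEq ι]

def stdBasisWith (α : ι → ZMod p) : Set (ι → ZMod p) :=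
  Set.range (fun i => Pi.single i 1) ∪ {α}

variable (α : ι → ZMod p)

lemma mem_itSum_stdBasisWith (k : ℕ) (x : ι → ZMod p) :
    x ∈ itSum (stdBasisWith α) k ↔
      ∃ f : ι → ℕ, ∃ m : ℕ, ∑ i, f i + m = k ∧ ∀ i, x i = f i + m * α i := by
  simp only [stdBasisWith, mem_itSum_range_union_singleton, funext_iff, eq_comm (b := x _)]
  refine exists_congr fun f => exists_congr fun m =>
    and_congr_right fun _ => forall_congr' fun j => ?_
  simp [Finset.sum_apply, Pi.single_apply, nsmul_eq_mul]

omit [DecidableEq ι] in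
lemma sum_eq_of_forall_eq_add_mul {f : ι → ℕ} {m k : ℕ} (hk : ∑ i, f i + m = k)
    {x : ι → ZMod p} (hx : ∀ i, x i = f i + m * α i) :
    ∑ i, x i = k + m * (∑ i, α i - 1) := by
  simp only [hx, Finset.sum_add_distrib, ← Finset.mul_sum, ← hk, Nat.cast_add, Nat.cast_sum]
  ring

lemma itSum_stdBasisWith_ne_univ_of_sum_eq_one [Nonempty ι] (hα : ∑ i, α i = 1) (k : ℕ) :
    itSum (stdBasisWith α) k ≠ Set.univ := by
  have hsum : ∀ x ∈ itSum (stdBasisWith α) k, ∑ i, x i = k := fun x hx => by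
    obtain ⟨f, m, hk, hx⟩ := (mem_itSum_stdBasisWith α k x).1 hx
    rw [sum_eq_of_forall_eq_add_mul α hk hx, hα, sub_self, mul_zero, add_zero]
  intro h
  obtain ⟨j⟩ := ‹Nonempty ι›
  have h0 := hsum 0 (h ▸ trivial)
  have h1 := hsum (Pi.single j 1) (h ▸ trivial)
  simp only [Pi.zero_apply, Finset.sum_const_zero, Finset.sum_pi_single', Finset.mem_univ,
    if_true] at h0 h1
  exact one_ne_zero (h1.trans h0.symm)

lemma itSum_stdBasisWith_eq_univ (hα : ∑ i, α i ≠ 1) {k : ℕ}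
    (hk : Fintype.card ι * (p - 1) ≤ k) : itSum (stdBasisWith α) k = Set.univ := by
  refine Set.eq_univ_of_forall fun x => (mem_itSum_stdBasisWith α k x).2 ?_
  -- `μ` is forced modulo `p` by summing the coordinates of `x = f + μ α`
  set μ : ZMod p := (∑ i, x i - k) / (∑ i, α i - 1)
  have hμ : μ * (∑ i, α i - 1) = ∑ i, x i - k := div_mul_cancel₀ _ (sub_ne_zero.2 hα)
  set f : ι → ℕ := fun i => (x i - μ * α i).val
  have hf : ∑ i, f i ≤ k := calc
    ∑ i, f i ≤ ∑ _i : ι, (p - 1) :=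
      Finset.sum_le_sum fun i _ => Nat.le_sub_one_of_lt (ZMod.val_lt _)
    _ = Fintype.card ι * (p - 1) := by rw [Finset.sum_const, smul_eq_mul, Finset.card_univ]
    _ ≤ k := hk
  refine ⟨f, k - ∑ i, f i, Nat.add_sub_cancel' hf, fun i => ?_⟩
  have hm : ((k - ∑ i, f i : ℕ) : ZMod p) = μ := by
    simp only [f, Nat.cast_sub hf, Nat.cast_sum, ZMod.natCast_zmod_val, Finset.sum_sub_distrib,
      ← Finset.mul_sum]
    linear_combination hμ
  rw [hm, ZMod.natCast_zmod_val, sub_add_cancel]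

lemma itSum_stdBasisWith_pred_ne_univ [Nonempty ι] (hα : ∑ i, α i ≠ 1) :
    itSum (stdBasisWith α) (Fintype.card ι * (p - 1) - 1) ≠ Set.univ := by
  set k := Fintype.card ι * (p - 1) - 1
  have hk : Fintype.card ι * (p - 1) = k + 1 :=
    (Nat.sub_add_cancel (Nat.mul_pos Fintype.card_pos (Nat.sub_pos_of_lt
      (Fact.out : p.Prime).one_lt))).symm
  intro h
  obtain ⟨f, m, hfm, hx⟩ := (mem_itSum_stdBasisWith α k (fun i => -1 - α i)).1 (h ▸ trivial)
  have hkcast : (k : ZMod p) = -Fintype.card ι - 1 := by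
    have := congrArg (Nat.cast : ℕ → ZMod p) hk
    push_cast [natCast_sub_one_eq_neg_one] at this
    linear_combination -this
  have hm : (m : ZMod p) = -1 := by
    have hsum := sum_eq_of_forall_eq_add_mul α hfm (x := fun i => -1 - α i) hx
    simp only [Finset.sum_sub_distrib, Finset.sum_const, Finset.card_univ, nsmul_eq_mul,
      mul_neg_one, hkcast] at hsum
    have : ((m : ZMod p) + 1) * (∑ i, α i - 1) = 0 := by linear_combination -hsum
    exact eq_neg_of_add_eq_zero_left
      ((mul_eq_zero.1 this).resolve_right (sub_ne_zero.2 hα))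
  have hf : ∀ i, p - 1 ≤ f i := fun i => le_of_natCast_eq_neg_one <| by
    linear_combination -(hx i) - α i * hm
  have := Finset.sum_le_sum fun i (_ : i ∈ Finset.univ) => hf i
  rw [Finset.sum_const, smul_eq_mul, Finset.card_univ] at this
  omega

end Coordinates

theorem stmt_16 (p : ℕ) [Fact p.Prime] (d : ℕ) (hd : 1 ≤ d)
    (e : Fin d → (Fin d → ZMod p)) (he : LinearIndependent (ZMod p) e)
    (α : Fin d → ZMod p)
    (A : Set (Fin d → ZMod p)) (hA : A = Set.range e ∪ {∑ i, α i • e i}) :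
    ((∃ k, 1 ≤ k ∧ itSum A k = Set.univ) ↔ (∑ i, α i) ≠ 1) ∧
    ((∑ i, α i) ≠ 1 →
      itSum A (d * (p - 1)) = Set.univ ∧ itSum A (d * (p - 1) - 1) ≠ Set.univ) := by
  have : Nonempty (Fin d) := ⟨⟨0, hd⟩⟩
  let B := basisOfLinearIndependentOfCardEqFinrank he (by simp)
  have hBA : B.equivFun.symm.toAddEquiv '' stdBasisWith α = A := by
    rw [hA, stdBasisWith, Set.image_union, Set.image_singleton, ← Set.range_comp]
    simp [B, Function.comp_def, Module.Basis.equivFun_symm_apply, Pi.single_apply, ite_smul]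
  have hd' : 1 ≤ d * (p - 1) := Nat.mul_pos hd (Nat.sub_pos_of_lt (Fact.out : p.Prime).one_lt)
  simp only [← hBA, ne_eq, itSum_image_eq_univ_iff]
  have hcard := Fintype.card_fin d
  refine ⟨⟨fun ⟨k, _, hk⟩ hα => itSum_stdBasisWith_ne_univ_of_sum_eq_one α hα k hk,
    fun hα => ⟨d * (p - 1), hd', itSum_stdBasisWith_eq_univ α hα (by rw [hcard])⟩⟩,
    fun hα => ⟨itSum_stdBasisWith_eq_univ α hα (by rw [hcard]), ?_⟩⟩
  simpa only [hcard] using itSum_stdBasisWith_pred_ne_univ α hα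
end

section
/- Let d ≢ 1 (mod p), e_1, …, e_d linearly independent in 𝔽_p^d, and A = {e_1, …, e_d, e_1 + ⋯ + e_d}. Then: (i) every element of 𝔽_p^d is a sum of at most (d+1)(p−1)/2 elements of A; (ii) (d(p−1)−1)A ≠ 𝔽_p^d; (iii) d(p−1)A = 𝔽_p^d. -/
open Pointwise

/-!
Write `x = ∑ cᵢ eᵢ`. A sum of `n` elements of `A` using `e₁ + ⋯ + e_d` exactly `m` times and `eᵢ`
exactly `aᵢ` times equals `x` iff `m + aᵢ ≡ cᵢ (mod p)` for all `i`, where `m + ∑ aᵢ = n`. For a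
fixed residue `μ` of `m` the cheapest choice is `m = val μ`, `aᵢ = val (cᵢ - μ)`, and `n` is
attainable iff it is at least this cost and congruent to it, since `p` can be added to `m`.
Averaging the cost over all `μ` gives `(d + 1) p (p - 1) / 2`, whence (i). The cost is
`∑ cᵢ + (1 - d) μ` modulo `p`, so when `1 - d` is a unit each `n` fixes `μ`. For `n ≥ d (p - 1)`
the cost is at most `(d + 1)(p - 1) < n + p`, hence at most `n`: this is (iii). For `c ≡ -2` and
`n = d (p - 1) - 1` it forces `μ = -1`, making every coefficient `≡ -1`, so the cost
`(d + 1)(p - 1)` exceeds `n`: this is (ii).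
-/

section Sumset

variable {G ι : Type*} [AddCommGroup G] [Fintype ι]

lemma mem_itSum_range_iff (f : ι → G) (n : ℕ) (x : G) :
    x ∈ itSum (Set.range f) n ↔ ∃ a : ι → ℕ, ∑ i, a i = n ∧ ∑ i, a i • f i = x := by
  classical
  have add_single (a : ι → ℕ) (j : ι) :
      ∑ i, (a + Pi.single j 1 : ι → ℕ) i = ∑ i, a i + 1 ∧
        ∑ i, (a + Pi.single j 1 : ι → ℕ) i • f i = ∑ i, a i • f i + f j := by
    simp [Finset.sum_add_distrib, add_smul, Pi.single_apply]
  induction n generalizing x with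
  | zero =>
    simp only [itSum, Set.mem_singleton_iff, Finset.sum_eq_zero_iff, Finset.mem_univ,
      true_imp_iff]
    constructor
    · rintro rfl
      exact ⟨0, fun _ => rfl, by simp⟩
    · rintro ⟨a, ha, rfl⟩
      simp [ha]
  | succ n ih =>
    simp only [itSum, Set.mem_add, Set.mem_range, ih]
    constructor
    · rintro ⟨_, ⟨a, rfl, rfl⟩, _, ⟨j, rfl⟩, rfl⟩
      exact ⟨a + Pi.single j 1, add_single a j⟩
    · rintro ⟨a, ha, rfl⟩
      obtain ⟨j, -, hj⟩ := Finset.exists_ne_zero_of_sum_ne_zero (ha.trans_ne n.succ_ne_zero)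
      have hsplit : a = Function.update a j (a j - 1) + Pi.single j 1 := by
        ext i
        rcases eq_or_ne i j with rfl | hij
        · simp only [Pi.add_apply, Function.update_self, Pi.single_eq_same]
          omega
        · simp [hij]
      obtain ⟨hsum, hval⟩ := add_single (Function.update a j (a j - 1)) j
      rw [← hsplit] at hsum hval
      exact ⟨_, ⟨Function.update a j (a j - 1), by omega, rfl⟩, f j, ⟨j, rfl⟩, hval.symm⟩

lemma mem_itSum_range_union_sum_iff {R M : Type*} [Ring R] [AddCommGroup M] [Module R M]
    (b : Module.Basis ι R M) (n : ℕ) (x : M) :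
    x ∈ itSum (Set.range b ∪ {∑ i, b i}) n ↔
      ∃ (m : ℕ) (a : ι → ℕ), m + ∑ i, a i = n ∧ ∀ i, (m + a i : R) = b.repr x i := by
  have hrepr (m : ℕ) (a : ι → ℕ) (i : ι) :
      b.repr (m • ∑ j, b j + ∑ j, a j • b j) i = m + a i := by
    classical
    simp [Finsupp.single_apply]
  rw [Set.union_comm, Set.singleton_union, ← Option.range_elim, mem_itSum_range_iff]
  simp only [Fintype.sum_option, Option.elim_none, Option.elim_some]
  constructor
  · rintro ⟨a, rfl, rfl⟩
    exact ⟨a none, fun i => a (some i), rfl, fun i => (hrepr (a none) (a ∘ some) i).symm⟩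
  · rintro ⟨m, a, rfl, ha⟩
    refine ⟨fun o => o.elim m a, rfl, b.ext_elem_iff.2 fun i => ?_⟩
    simpa only [Option.elim_none, Option.elim_some, hrepr] using ha i

end Sumset

lemma ZMod.sum_val_mul_two (p : ℕ) [NeZero p] : (∑ z : ZMod p, z.val) * 2 = p * (p - 1) := by
  obtain ⟨q, rfl⟩ : ∃ q, p = q + 1 := Nat.exists_eq_succ_of_ne_zero (NeZero.ne p)
  exact (congrArg (· * 2) (Fin.sum_univ_eq_sum_range id _)).trans (Finset.sum_range_id_mul_two _)

lemma ZMod.natCast_pred_self (p : ℕ) [NeZero p] : ((p - 1 : ℕ) : ZMod p) = -1 := by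
  rw [Nat.cast_pred (NeZero.pos p), ZMod.natCast_self, zero_sub]

lemma ZMod.val_neg_one' (p : ℕ) [NeZero p] : (-1 : ZMod p).val = p - 1 := by
  rw [← ZMod.natCast_pred_self, ZMod.val_cast_of_lt (Nat.sub_lt (NeZero.pos p) one_pos)]

section MinSummands

variable {p : ℕ} [NeZero p] {ι : Type*} [Fintype ι]

/-- The fewest summands in a representation `m • ∑ eᵢ + ∑ aᵢ • eᵢ` of the vector with coordinates
`c` in which `m ≡ μ (mod p)`. -/
def minSummands (c : ι → ZMod p) (μ : ZMod p) : ℕ := μ.val + ∑ i, (c i - μ).val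

lemma exists_coeffs_iff_minSummands (c : ι → ZMod p) (n : ℕ) :
    (∃ (m : ℕ) (a : ι → ℕ), m + ∑ i, a i = n ∧ ∀ i, (m + a i : ZMod p) = c i) ↔
      ∃ μ, minSummands c μ ≤ n ∧ (minSummands c μ : ZMod p) = n := by
  constructor
  · rintro ⟨m, a, rfl, ha⟩
    have hval (k : ℕ) : (k : ZMod p).val ≤ k := by
      rw [ZMod.val_natCast]; exact Nat.mod_le k p
    have hsub (i : ι) : c i - m = a i := by rw [← ha i]; ring
    refine ⟨m, add_le_add (hval m) (Finset.sum_le_sum fun i _ => ?_), ?_⟩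
    · rw [hsub]; exact hval _
    · simp [minSummands, hsub]
  · rintro ⟨μ, hle, hcast⟩
    refine ⟨μ.val + (n - minSummands c μ), fun i => (c i - μ).val, ?_, fun i => ?_⟩
    · simp only [minSummands] at hle ⊢
      omega
    · rw [Nat.cast_add, Nat.cast_sub hle, ← hcast]
      simp

lemma natCast_minSummands (c : ι → ZMod p) (μ : ZMod p) :
    (minSummands c μ : ZMod p) = ∑ i, c i + (1 - Fintype.card ι) * μ := by
  simp [minSummands, Finset.sum_sub_distrib]
  ring

lemma minSummands_le (c : ι → ZMod p) (μ : ZMod p) :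
    minSummands c μ ≤ (Fintype.card ι + 1) * (p - 1) := by
  have hval (z : ZMod p) : z.val ≤ p - 1 := Nat.le_pred_of_lt (ZMod.val_lt z)
  calc minSummands c μ ≤ (p - 1) + ∑ _i : ι, (p - 1) :=
        add_le_add (hval μ) (Finset.sum_le_sum fun i _ => hval _)
    _ = (Fintype.card ι + 1) * (p - 1) := by simp; ring

lemma sum_minSummands_mul_two (c : ι → ZMod p) :
    (∑ μ, minSummands c μ) * 2 = (Fintype.card ι + 1) * (p * (p - 1)) := by
  have hshift (i : ι) : ∑ μ, (c i - μ).val = ∑ z : ZMod p, z.val :=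
    Fintype.sum_equiv (Equiv.subLeft (c i)) _ _ fun _ => rfl
  simp only [minSummands, Finset.sum_add_distrib]
  rw [Finset.sum_comm, Finset.sum_congr rfl fun i _ => hshift i]
  simp only [Finset.sum_const, Finset.card_univ, smul_eq_mul]
  rw [← ZMod.sum_val_mul_two]
  ring

lemma exists_minSummands_le (c : ι → ZMod p) :
    ∃ μ, minSummands c μ ≤ (Fintype.card ι + 1) * (p - 1) / 2 := by
  by_contra! h
  have hp := NeZero.pos p
  have hsum : p * ((Fintype.card ι + 1) * (p - 1) / 2 + 1) ≤ ∑ μ, minSummands c μ := by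
    simpa using Finset.card_nsmul_le_sum Finset.univ (minSummands c) _ fun μ _ => h μ
  have hdiv := Nat.lt_div_mul_add (a := (Fintype.card ι + 1) * (p - 1)) two_pos
  have := sum_minSummands_mul_two c
  nlinarith

lemma exists_minSummands_of_le (c : ι → ZMod p) (hunit : IsUnit (1 - Fintype.card ι : ZMod p))
    {n : ℕ} (hn : Fintype.card ι * (p - 1) ≤ n) :
    ∃ μ, minSummands c μ ≤ n ∧ (minSummands c μ : ZMod p) = n := by
  set μ : ZMod p := ↑hunit.unit⁻¹ * (n - ∑ i, c i)
  have hcast : (minSummands c μ : ZMod p) = n := by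
    rw [natCast_minSummands, ← mul_assoc, IsUnit.mul_val_inv, one_mul]
    ring
  refine ⟨μ, Nat.ModEq.le_of_lt_add ((ZMod.natCast_eq_natCast_iff _ _ _).1 hcast) ?_, hcast⟩
  have := NeZero.pos p
  calc minSummands c μ ≤ (Fintype.card ι + 1) * (p - 1) := minSummands_le c μ
    _ < Fintype.card ι * (p - 1) + p := by rw [add_one_mul]; omega
    _ ≤ n + p := by omega

lemma not_exists_minSummands_const_neg_two [Nonempty ι] (hp : 1 < p)
    (hunit : IsUnit (1 - Fintype.card ι : ZMod p)) :
    ¬ ∃ μ, minSummands (fun _ : ι => (-2 : ZMod p)) μ ≤ Fintype.card ι * (p - 1) - 1 ∧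
      (minSummands (fun _ : ι => (-2 : ZMod p)) μ : ZMod p) =
        (Fintype.card ι * (p - 1) - 1 : ℕ) := by
  rintro ⟨μ, hle, hcast⟩
  have hd := Fintype.card_pos (α := ι)
  have hpos : 0 < Fintype.card ι * (p - 1) := Nat.mul_pos hd (by omega)
  have hμ : μ = -1 := by
    rw [natCast_minSummands, Nat.cast_sub hpos, Nat.cast_mul, ZMod.natCast_pred_self] at hcast
    simp only [Finset.sum_const, Finset.card_univ, nsmul_eq_mul, Nat.cast_one] at hcast
    have : (1 - Fintype.card ι : ZMod p) * (μ + 1) = 0 := by linear_combination hcast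
    exact eq_neg_of_add_eq_zero_left (hunit.mul_right_eq_zero.1 this)
  have : minSummands (fun _ : ι => (-2 : ZMod p)) μ = (Fintype.card ι + 1) * (p - 1) := by
    simp only [minSummands, hμ, show (-2 : ZMod p) - -1 = -1 by ring, ZMod.val_neg_one']
    simp; ring
  rw [this, add_one_mul] at hle
  omega

end MinSummands

theorem stmt_17 (p : ℕ) [Fact p.Prime] (d : ℕ) (hd : 1 ≤ d)
    (hdp : (d : ZMod p) ≠ 1)
    (e : Fin d → (Fin d → ZMod p)) (he : LinearIndependent (ZMod p) e)
    (A : Set (Fin d → ZMod p)) (hA : A = Set.range e ∪ {∑ i, e i}) :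
    (∀ x : Fin d → ZMod p, ∃ i ≤ (d + 1) * (p - 1) / 2, x ∈ itSum A i) ∧
    itSum A (d * (p - 1) - 1) ≠ Set.univ ∧
    itSum A (d * (p - 1)) = Set.univ := by
  have : Nonempty (Fin d) := Fin.pos_iff_nonempty.1 hd
  have hfinrank : Fintype.card (Fin d) = Module.finrank (ZMod p) (Fin d → ZMod p) := by simp
  obtain ⟨b, rfl⟩ : ∃ b : Module.Basis (Fin d) (ZMod p) (Fin d → ZMod p), ⇑b = e :=
    ⟨_, coe_basisOfLinearIndependentOfCardEqFinrank he hfinrank⟩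
  subst hA
  have hmem (x : Fin d → ZMod p) (n : ℕ) : x ∈ itSum (Set.range b ∪ {∑ i, b i}) n ↔
      ∃ μ, minSummands (b.repr x) μ ≤ n ∧ (minSummands (b.repr x) μ : ZMod p) = n :=
    (mem_itSum_range_union_sum_iff b n x).trans (exists_coeffs_iff_minSummands _ n)
  have hunit : IsUnit (1 - Fintype.card (Fin d) : ZMod p) := by
    simpa [isUnit_iff_ne_zero, sub_eq_zero] using hdp.symm
  refine ⟨fun x => ?_, fun huniv => ?_, Set.eq_univ_of_forall fun x => (hmem x _).2 ?_⟩
  · obtain ⟨μ, hμ⟩ := exists_minSummands_le (b.repr x)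
    exact ⟨_, by simpa using hμ, (hmem x _).2 ⟨μ, le_rfl, rfl⟩⟩
  · have h := (hmem (b.equivFun.symm fun _ => -2) _).1 (huniv ▸ Set.mem_univ _)
    have hx₀ : ⇑(b.repr (b.equivFun.symm fun _ => -2)) = fun _ => -2 :=
      b.equivFun.apply_symm_apply _
    rw [hx₀] at h
    exact not_exists_minSummands_const_neg_two (Fact.out : p.Prime).one_lt hunit
      (by simpa using h)
  · simpa using exists_minSummands_of_le (b.repr x) hunit (n := d * (p - 1)) (by simp)
end

section
/- Let G be an infinite abelian group and A ⊆ G with A ∪ 2A ∪ 3A ∼ G and kA ∼ G for some finite k. Then the least such k is at most 17. Consequently X_G(3) ≤ 17. -/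
open Pointwise

set_option linter.unusedSectionVars false
set_option linter.unusedVariables false

namespace Stmt19

lemma rich {Z : Set ℕ} (hcl : ∀ x ∈ Z, ∀ y ∈ Z, x + y ∈ Z)
    {a : ℕ} (ha : a ∈ Z) (ha2 : 2 ≤ a) (ha4 : a ≤ 4)
    {b : ℕ} (hb : b ∈ Z) (hb5 : 5 ≤ b) (hb7 : b ≤ 7)
    {zo : ℕ} (hzo : zo ∈ Z) (hzo2 : 2 ≤ zo) (hzo9 : zo ≤ 9) (hzoo : zo % 2 = 1)
    {z3 : ℕ} (hz3 : z3 ∈ Z) (hz32 : 2 ≤ z3) (hz39 : z3 ≤ 9) (hz33 : ¬ (3 ∣ z3)) :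
    ∃ t, t ≤ 14 ∧ t ∈ Z ∧ t + 1 ∈ Z ∧ t + 2 ∈ Z := by
  rcases (by omega : a = 2 ∨ a = 3 ∨ a = 4) with rfl | rfl | rfl <;>
    rcases (by omega : zo = 3 ∨ zo = 5 ∨ zo = 7 ∨ zo = 9) with rfl | rfl | rfl | rfl <;>
    rcases (by omega : z3 = 2 ∨ z3 = 4 ∨ z3 = 5 ∨ z3 = 7 ∨ z3 = 8) with rfl | rfl | rfl | rfl | rfl <;>
    rcases (by omega : b = 5 ∨ b = 6 ∨ b = 7) with rfl | rfl | rfl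
  · exact ⟨2, by norm_num, ha, hzo, (by have h := (hcl 2 ha 2 ha); norm_num at h; exact h)⟩
  · exact ⟨2, by norm_num, ha, hzo, (by have h := (hcl 2 ha 2 ha); norm_num at h; exact h)⟩
  · exact ⟨2, by norm_num, ha, hzo, (by have h := (hcl 2 ha 2 ha); norm_num at h; exact h)⟩
  · exact ⟨2, by norm_num, ha, hzo, hz3⟩
  · exact ⟨2, by norm_num, ha, hzo, hz3⟩
  · exact ⟨2, by norm_num, ha, hzo, hz3⟩
  · exact ⟨2, by norm_num, ha, hzo, (by have h := (hcl 2 ha 2 ha); norm_num at h; exact h)⟩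
  · exact ⟨2, by norm_num, ha, hzo, (by have h := (hcl 2 ha 2 ha); norm_num at h; exact h)⟩
  · exact ⟨2, by norm_num, ha, hzo, (by have h := (hcl 2 ha 2 ha); norm_num at h; exact h)⟩
  · exact ⟨2, by norm_num, ha, hzo, (by have h := (hcl 2 ha 2 ha); norm_num at h; exact h)⟩
  · exact ⟨2, by norm_num, ha, hzo, (by have h := (hcl 2 ha 2 ha); norm_num at h; exact h)⟩
  · exact ⟨2, by norm_num, ha, hzo, (by have h := (hcl 2 ha 2 ha); norm_num at h; exact h)⟩
  · exact ⟨2, by norm_num, ha, hzo, (by have h := (hcl 2 ha 2 ha); norm_num at h; exact h)⟩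
  · exact ⟨2, by norm_num, ha, hzo, (by have h := (hcl 2 ha 2 ha); norm_num at h; exact h)⟩
  · exact ⟨2, by norm_num, ha, hzo, (by have h := (hcl 2 ha 2 ha); norm_num at h; exact h)⟩
  · exact ⟨4, by norm_num, (by have h := (hcl 2 ha 2 ha); norm_num at h; exact h), hzo, (by have h := (hcl (2 + 2) (hcl 2 ha 2 ha) 2 ha); norm_num at h; exact h)⟩
  · exact ⟨4, by norm_num, (by have h := (hcl 2 ha 2 ha); norm_num at h; exact h), hzo, hb⟩
  · exact ⟨4, by norm_num, (by have h := (hcl 2 ha 2 ha); norm_num at h; exact h), hzo, (by have h := (hcl (2 + 2) (hcl 2 ha 2 ha) 2 ha); norm_num at h; exact h)⟩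
  · exact ⟨4, by norm_num, hz3, hzo, (by have h := (hcl 2 ha 4 hz3); norm_num at h; exact h)⟩
  · exact ⟨4, by norm_num, hz3, hzo, hb⟩
  · exact ⟨4, by norm_num, hz3, hzo, (by have h := (hcl 2 ha 4 hz3); norm_num at h; exact h)⟩
  · exact ⟨4, by norm_num, (by have h := (hcl 2 ha 2 ha); norm_num at h; exact h), hzo, (by have h := (hcl (2 + 2) (hcl 2 ha 2 ha) 2 ha); norm_num at h; exact h)⟩
  · exact ⟨4, by norm_num, (by have h := (hcl 2 ha 2 ha); norm_num at h; exact h), hzo, hb⟩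
  · exact ⟨4, by norm_num, (by have h := (hcl 2 ha 2 ha); norm_num at h; exact h), hzo, (by have h := (hcl (2 + 2) (hcl 2 ha 2 ha) 2 ha); norm_num at h; exact h)⟩
  · exact ⟨4, by norm_num, (by have h := (hcl 2 ha 2 ha); norm_num at h; exact h), hzo, (by have h := (hcl (2 + 2) (hcl 2 ha 2 ha) 2 ha); norm_num at h; exact h)⟩
  · exact ⟨4, by norm_num, (by have h := (hcl 2 ha 2 ha); norm_num at h; exact h), hzo, hb⟩
  · exact ⟨4, by norm_num, (by have h := (hcl 2 ha 2 ha); norm_num at h; exact h), hzo, (by have h := (hcl (2 + 2) (hcl 2 ha 2 ha) 2 ha); norm_num at h; exact h)⟩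
  · exact ⟨4, by norm_num, (by have h := (hcl 2 ha 2 ha); norm_num at h; exact h), hzo, (by have h := (hcl (2 + 2) (hcl 2 ha 2 ha) 2 ha); norm_num at h; exact h)⟩
  · exact ⟨4, by norm_num, (by have h := (hcl 2 ha 2 ha); norm_num at h; exact h), hzo, hb⟩
  · exact ⟨4, by norm_num, (by have h := (hcl 2 ha 2 ha); norm_num at h; exact h), hzo, (by have h := (hcl (2 + 2) (hcl 2 ha 2 ha) 2 ha); norm_num at h; exact h)⟩
  · exact ⟨4, by norm_num, (by have h := (hcl 2 ha 2 ha); norm_num at h; exact h), hb, (by have h := (hcl (2 + 2) (hcl 2 ha 2 ha) 2 ha); norm_num at h; exact h)⟩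
  · exact ⟨6, by norm_num, hb, hzo, (by have h := (hcl 2 ha 6 hb); norm_num at h; exact h)⟩
  · exact ⟨6, by norm_num, (by have h := (hcl (2 + 2) (hcl 2 ha 2 ha) 2 ha); norm_num at h; exact h), hzo, (by have h := (hcl ((2 + 2) + 2) (hcl (2 + 2) (hcl 2 ha 2 ha) 2 ha) 2 ha); norm_num at h; exact h)⟩
  · exact ⟨4, by norm_num, hz3, hb, (by have h := (hcl 2 ha 4 hz3); norm_num at h; exact h)⟩
  · exact ⟨6, by norm_num, hb, hzo, (by have h := (hcl 2 ha 6 hb); norm_num at h; exact h)⟩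
  · exact ⟨6, by norm_num, (by have h := (hcl 2 ha 4 hz3); norm_num at h; exact h), hzo, (by have h := (hcl 4 hz3 4 hz3); norm_num at h; exact h)⟩
  · exact ⟨4, by norm_num, (by have h := (hcl 2 ha 2 ha); norm_num at h; exact h), hz3, (by have h := (hcl (2 + 2) (hcl 2 ha 2 ha) 2 ha); norm_num at h; exact h)⟩
  · exact ⟨4, by norm_num, (by have h := (hcl 2 ha 2 ha); norm_num at h; exact h), hz3, hb⟩
  · exact ⟨4, by norm_num, (by have h := (hcl 2 ha 2 ha); norm_num at h; exact h), hz3, (by have h := (hcl (2 + 2) (hcl 2 ha 2 ha) 2 ha); norm_num at h; exact h)⟩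
  · exact ⟨4, by norm_num, (by have h := (hcl 2 ha 2 ha); norm_num at h; exact h), hb, (by have h := (hcl (2 + 2) (hcl 2 ha 2 ha) 2 ha); norm_num at h; exact h)⟩
  · exact ⟨6, by norm_num, hb, hzo, (by have h := (hcl 2 ha 6 hb); norm_num at h; exact h)⟩
  · exact ⟨6, by norm_num, (by have h := (hcl (2 + 2) (hcl 2 ha 2 ha) 2 ha); norm_num at h; exact h), hzo, (by have h := (hcl ((2 + 2) + 2) (hcl (2 + 2) (hcl 2 ha 2 ha) 2 ha) 2 ha); norm_num at h; exact h)⟩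
  · exact ⟨4, by norm_num, (by have h := (hcl 2 ha 2 ha); norm_num at h; exact h), hb, (by have h := (hcl (2 + 2) (hcl 2 ha 2 ha) 2 ha); norm_num at h; exact h)⟩
  · exact ⟨6, by norm_num, hb, hzo, hz3⟩
  · exact ⟨6, by norm_num, (by have h := (hcl (2 + 2) (hcl 2 ha 2 ha) 2 ha); norm_num at h; exact h), hzo, hz3⟩
  · exact ⟨4, by norm_num, (by have h := (hcl 2 ha 2 ha); norm_num at h; exact h), hb, (by have h := (hcl (2 + 2) (hcl 2 ha 2 ha) 2 ha); norm_num at h; exact h)⟩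
  · exact ⟨8, by norm_num, (by have h := (hcl 2 ha 6 hb); norm_num at h; exact h), hzo, (by have h := (hcl (2 + 2) (hcl 2 ha 2 ha) 6 hb); norm_num at h; exact h)⟩
  · exact ⟨6, by norm_num, (by have h := (hcl (2 + 2) (hcl 2 ha 2 ha) 2 ha); norm_num at h; exact h), hb, (by have h := (hcl ((2 + 2) + 2) (hcl (2 + 2) (hcl 2 ha 2 ha) 2 ha) 2 ha); norm_num at h; exact h)⟩
  · exact ⟨4, by norm_num, hz3, hb, (by have h := (hcl 2 ha 4 hz3); norm_num at h; exact h)⟩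
  · exact ⟨8, by norm_num, (by have h := (hcl 2 ha 6 hb); norm_num at h; exact h), hzo, (by have h := (hcl 4 hz3 6 hb); norm_num at h; exact h)⟩
  · exact ⟨6, by norm_num, (by have h := (hcl 2 ha 4 hz3); norm_num at h; exact h), hb, (by have h := (hcl 4 hz3 4 hz3); norm_num at h; exact h)⟩
  · exact ⟨4, by norm_num, (by have h := (hcl 2 ha 2 ha); norm_num at h; exact h), hz3, (by have h := (hcl (2 + 2) (hcl 2 ha 2 ha) 2 ha); norm_num at h; exact h)⟩
  · exact ⟨4, by norm_num, (by have h := (hcl 2 ha 2 ha); norm_num at h; exact h), hz3, hb⟩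
  · exact ⟨4, by norm_num, (by have h := (hcl 2 ha 2 ha); norm_num at h; exact h), hz3, (by have h := (hcl (2 + 2) (hcl 2 ha 2 ha) 2 ha); norm_num at h; exact h)⟩
  · exact ⟨4, by norm_num, (by have h := (hcl 2 ha 2 ha); norm_num at h; exact h), hb, (by have h := (hcl (2 + 2) (hcl 2 ha 2 ha) 2 ha); norm_num at h; exact h)⟩
  · exact ⟨6, by norm_num, hb, hz3, (by have h := (hcl 2 ha 6 hb); norm_num at h; exact h)⟩
  · exact ⟨6, by norm_num, (by have h := (hcl (2 + 2) (hcl 2 ha 2 ha) 2 ha); norm_num at h; exact h), hz3, (by have h := (hcl ((2 + 2) + 2) (hcl (2 + 2) (hcl 2 ha 2 ha) 2 ha) 2 ha); norm_num at h; exact h)⟩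
  · exact ⟨4, by norm_num, (by have h := (hcl 2 ha 2 ha); norm_num at h; exact h), hb, (by have h := (hcl (2 + 2) (hcl 2 ha 2 ha) 2 ha); norm_num at h; exact h)⟩
  · exact ⟨8, by norm_num, hz3, hzo, (by have h := (hcl 8 hz3 2 ha); norm_num at h; exact h)⟩
  · exact ⟨6, by norm_num, (by have h := (hcl (2 + 2) (hcl 2 ha 2 ha) 2 ha); norm_num at h; exact h), hb, hz3⟩
  · exact ⟨2, by norm_num, hz3, ha, (by have h := (hcl 2 hz3 2 hz3); norm_num at h; exact h)⟩
  · exact ⟨2, by norm_num, hz3, ha, (by have h := (hcl 2 hz3 2 hz3); norm_num at h; exact h)⟩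
  · exact ⟨2, by norm_num, hz3, ha, (by have h := (hcl 2 hz3 2 hz3); norm_num at h; exact h)⟩
  · exact ⟨3, by norm_num, ha, hz3, hb⟩
  · exact ⟨6, by norm_num, hb, (by have h := (hcl 3 ha 4 hz3); norm_num at h; exact h), (by have h := (hcl 4 hz3 4 hz3); norm_num at h; exact h)⟩
  · exact ⟨6, by norm_num, (by have h := (hcl 3 ha 3 ha); norm_num at h; exact h), hb, (by have h := (hcl 4 hz3 4 hz3); norm_num at h; exact h)⟩
  · exact ⟨8, by norm_num, (by have h := (hcl 3 ha 5 hz3); norm_num at h; exact h), (by have h := (hcl (3 + 3) (hcl 3 ha 3 ha) 3 ha); norm_num at h; exact h), (by have h := (hcl 5 hz3 5 hz3); norm_num at h; exact h)⟩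
  · exact ⟨8, by norm_num, (by have h := (hcl 3 ha 5 hz3); norm_num at h; exact h), (by have h := (hcl 3 ha 6 hb); norm_num at h; exact h), (by have h := (hcl 5 hz3 5 hz3); norm_num at h; exact h)⟩
  · exact ⟨5, by norm_num, hz3, (by have h := (hcl 3 ha 3 ha); norm_num at h; exact h), hb⟩
  · exact ⟨5, by norm_num, hb, (by have h := (hcl 3 ha 3 ha); norm_num at h; exact h), hz3⟩
  · exact ⟨12, by norm_num, (by have h := (hcl 6 hb 6 hb); norm_num at h; exact h), (by have h := (hcl 6 hb 7 hz3); norm_num at h; exact h), (by have h := (hcl 7 hz3 7 hz3); norm_num at h; exact h)⟩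
  · exact ⟨12, by norm_num, (by have h := (hcl ((3 + 3) + 3) (hcl (3 + 3) (hcl 3 ha 3 ha) 3 ha) 3 ha); norm_num at h; exact h), (by have h := (hcl (3 + 3) (hcl 3 ha 3 ha) 7 hz3); norm_num at h; exact h), (by have h := (hcl 7 hz3 7 hz3); norm_num at h; exact h)⟩
  · exact ⟨8, by norm_num, hz3, (by have h := (hcl (3 + 3) (hcl 3 ha 3 ha) 3 ha); norm_num at h; exact h), (by have h := (hcl 5 hb 5 hb); norm_num at h; exact h)⟩
  · exact ⟨14, by norm_num, (by have h := (hcl 8 hz3 6 hb); norm_num at h; exact h), (by have h := (hcl (3 + 6) (hcl 3 ha 6 hb) 6 hb); norm_num at h; exact h), (by have h := (hcl 8 hz3 8 hz3); norm_num at h; exact h)⟩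
  · exact ⟨6, by norm_num, (by have h := (hcl 3 ha 3 ha); norm_num at h; exact h), hb, hz3⟩
  · exact ⟨2, by norm_num, hz3, ha, (by have h := (hcl 2 hz3 2 hz3); norm_num at h; exact h)⟩
  · exact ⟨2, by norm_num, hz3, ha, (by have h := (hcl 2 hz3 2 hz3); norm_num at h; exact h)⟩
  · exact ⟨2, by norm_num, hz3, ha, (by have h := (hcl 2 hz3 2 hz3); norm_num at h; exact h)⟩
  · exact ⟨3, by norm_num, ha, hz3, hzo⟩
  · exact ⟨3, by norm_num, ha, hz3, hzo⟩
  · exact ⟨3, by norm_num, ha, hz3, hzo⟩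
  · exact ⟨8, by norm_num, (by have h := (hcl 3 ha 5 hzo); norm_num at h; exact h), (by have h := (hcl (3 + 3) (hcl 3 ha 3 ha) 3 ha); norm_num at h; exact h), (by have h := (hcl 5 hzo 5 hzo); norm_num at h; exact h)⟩
  · exact ⟨8, by norm_num, (by have h := (hcl 3 ha 5 hzo); norm_num at h; exact h), (by have h := (hcl 3 ha 6 hb); norm_num at h; exact h), (by have h := (hcl 5 hzo 5 hzo); norm_num at h; exact h)⟩
  · exact ⟨5, by norm_num, hzo, (by have h := (hcl 3 ha 3 ha); norm_num at h; exact h), hb⟩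
  · exact ⟨5, by norm_num, hzo, (by have h := (hcl 3 ha 3 ha); norm_num at h; exact h), hz3⟩
  · exact ⟨5, by norm_num, hzo, hb, hz3⟩
  · exact ⟨5, by norm_num, hzo, (by have h := (hcl 3 ha 3 ha); norm_num at h; exact h), hz3⟩
  · exact ⟨8, by norm_num, hz3, (by have h := (hcl (3 + 3) (hcl 3 ha 3 ha) 3 ha); norm_num at h; exact h), (by have h := (hcl 5 hzo 5 hzo); norm_num at h; exact h)⟩
  · exact ⟨8, by norm_num, hz3, (by have h := (hcl 3 ha 6 hb); norm_num at h; exact h), (by have h := (hcl 5 hzo 5 hzo); norm_num at h; exact h)⟩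
  · exact ⟨5, by norm_num, hzo, (by have h := (hcl 3 ha 3 ha); norm_num at h; exact h), hb⟩
  · exact ⟨2, by norm_num, hz3, ha, (by have h := (hcl 2 hz3 2 hz3); norm_num at h; exact h)⟩
  · exact ⟨2, by norm_num, hz3, ha, (by have h := (hcl 2 hz3 2 hz3); norm_num at h; exact h)⟩
  · exact ⟨2, by norm_num, hz3, ha, (by have h := (hcl 2 hz3 2 hz3); norm_num at h; exact h)⟩
  · exact ⟨3, by norm_num, ha, hz3, hb⟩
  · exact ⟨6, by norm_num, hb, hzo, (by have h := (hcl 4 hz3 4 hz3); norm_num at h; exact h)⟩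
  · exact ⟨6, by norm_num, (by have h := (hcl 3 ha 3 ha); norm_num at h; exact h), hzo, (by have h := (hcl 4 hz3 4 hz3); norm_num at h; exact h)⟩
  · exact ⟨5, by norm_num, hz3, (by have h := (hcl 3 ha 3 ha); norm_num at h; exact h), hzo⟩
  · exact ⟨5, by norm_num, hz3, hb, hzo⟩
  · exact ⟨5, by norm_num, hz3, (by have h := (hcl 3 ha 3 ha); norm_num at h; exact h), hzo⟩
  · exact ⟨5, by norm_num, hb, (by have h := (hcl 3 ha 3 ha); norm_num at h; exact h), hzo⟩
  · exact ⟨12, by norm_num, (by have h := (hcl 6 hb 6 hb); norm_num at h; exact h), (by have h := (hcl 6 hb 7 hzo); norm_num at h; exact h), (by have h := (hcl 7 hzo 7 hzo); norm_num at h; exact h)⟩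
  · exact ⟨12, by norm_num, (by have h := (hcl ((3 + 3) + 3) (hcl (3 + 3) (hcl 3 ha 3 ha) 3 ha) 3 ha); norm_num at h; exact h), (by have h := (hcl (3 + 3) (hcl 3 ha 3 ha) 7 hzo); norm_num at h; exact h), (by have h := (hcl 7 hzo 7 hzo); norm_num at h; exact h)⟩
  · exact ⟨5, by norm_num, hb, (by have h := (hcl 3 ha 3 ha); norm_num at h; exact h), hzo⟩
  · exact ⟨6, by norm_num, hb, hzo, hz3⟩
  · exact ⟨6, by norm_num, (by have h := (hcl 3 ha 3 ha); norm_num at h; exact h), hzo, hz3⟩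
  · exact ⟨2, by norm_num, hz3, ha, (by have h := (hcl 2 hz3 2 hz3); norm_num at h; exact h)⟩
  · exact ⟨2, by norm_num, hz3, ha, (by have h := (hcl 2 hz3 2 hz3); norm_num at h; exact h)⟩
  · exact ⟨2, by norm_num, hz3, ha, (by have h := (hcl 2 hz3 2 hz3); norm_num at h; exact h)⟩
  · exact ⟨3, by norm_num, ha, hz3, hb⟩
  · exact ⟨6, by norm_num, hb, (by have h := (hcl 3 ha 4 hz3); norm_num at h; exact h), (by have h := (hcl 4 hz3 4 hz3); norm_num at h; exact h)⟩
  · exact ⟨6, by norm_num, (by have h := (hcl 3 ha 3 ha); norm_num at h; exact h), hb, (by have h := (hcl 4 hz3 4 hz3); norm_num at h; exact h)⟩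
  · exact ⟨8, by norm_num, (by have h := (hcl 3 ha 5 hz3); norm_num at h; exact h), hzo, (by have h := (hcl 5 hz3 5 hz3); norm_num at h; exact h)⟩
  · exact ⟨8, by norm_num, (by have h := (hcl 3 ha 5 hz3); norm_num at h; exact h), hzo, (by have h := (hcl 5 hz3 5 hz3); norm_num at h; exact h)⟩
  · exact ⟨5, by norm_num, hz3, (by have h := (hcl 3 ha 3 ha); norm_num at h; exact h), hb⟩
  · exact ⟨5, by norm_num, hb, (by have h := (hcl 3 ha 3 ha); norm_num at h; exact h), hz3⟩
  · exact ⟨12, by norm_num, (by have h := (hcl 9 hzo 3 ha); norm_num at h; exact h), (by have h := (hcl 6 hb 7 hz3); norm_num at h; exact h), (by have h := (hcl 7 hz3 7 hz3); norm_num at h; exact h)⟩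
  · exact ⟨12, by norm_num, (by have h := (hcl 9 hzo 3 ha); norm_num at h; exact h), (by have h := (hcl (3 + 3) (hcl 3 ha 3 ha) 7 hz3); norm_num at h; exact h), (by have h := (hcl 7 hz3 7 hz3); norm_num at h; exact h)⟩
  · exact ⟨8, by norm_num, hz3, hzo, (by have h := (hcl 5 hb 5 hb); norm_num at h; exact h)⟩
  · exact ⟨14, by norm_num, (by have h := (hcl 8 hz3 6 hb); norm_num at h; exact h), (by have h := (hcl 9 hzo 6 hb); norm_num at h; exact h), (by have h := (hcl 8 hz3 8 hz3); norm_num at h; exact h)⟩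
  · exact ⟨6, by norm_num, (by have h := (hcl 3 ha 3 ha); norm_num at h; exact h), hb, hz3⟩
  · exact ⟨2, by norm_num, hz3, hzo, ha⟩
  · exact ⟨2, by norm_num, hz3, hzo, ha⟩
  · exact ⟨2, by norm_num, hz3, hzo, ha⟩
  · exact ⟨3, by norm_num, hzo, ha, hb⟩
  · exact ⟨6, by norm_num, hb, (by have h := (hcl 3 hzo 4 ha); norm_num at h; exact h), (by have h := (hcl 4 ha 4 ha); norm_num at h; exact h)⟩
  · exact ⟨6, by norm_num, (by have h := (hcl 3 hzo 3 hzo); norm_num at h; exact h), hb, (by have h := (hcl 4 ha 4 ha); norm_num at h; exact h)⟩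
  · exact ⟨3, by norm_num, hzo, ha, hz3⟩
  · exact ⟨3, by norm_num, hzo, ha, hz3⟩
  · exact ⟨3, by norm_num, hzo, ha, hz3⟩
  · exact ⟨3, by norm_num, hzo, ha, hb⟩
  · exact ⟨6, by norm_num, hb, hz3, (by have h := (hcl 4 ha 4 ha); norm_num at h; exact h)⟩
  · exact ⟨6, by norm_num, (by have h := (hcl 3 hzo 3 hzo); norm_num at h; exact h), hz3, (by have h := (hcl 4 ha 4 ha); norm_num at h; exact h)⟩
  · exact ⟨3, by norm_num, hzo, ha, hb⟩
  · exact ⟨6, by norm_num, hb, (by have h := (hcl 3 hzo 4 ha); norm_num at h; exact h), hz3⟩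
  · exact ⟨6, by norm_num, (by have h := (hcl 3 hzo 3 hzo); norm_num at h; exact h), hb, hz3⟩
  · exact ⟨4, by norm_num, ha, hzo, (by have h := (hcl 2 hz3 4 ha); norm_num at h; exact h)⟩
  · exact ⟨4, by norm_num, ha, hzo, hb⟩
  · exact ⟨4, by norm_num, ha, hzo, (by have h := (hcl 2 hz3 4 ha); norm_num at h; exact h)⟩
  · exact ⟨8, by norm_num, (by have h := (hcl 4 ha 4 ha); norm_num at h; exact h), (by have h := (hcl 4 ha 5 hzo); norm_num at h; exact h), (by have h := (hcl 5 hzo 5 hzo); norm_num at h; exact h)⟩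
  · exact ⟨4, by norm_num, ha, hzo, hb⟩
  · exact ⟨7, by norm_num, hb, (by have h := (hcl 4 ha 4 ha); norm_num at h; exact h), (by have h := (hcl 4 ha 5 hzo); norm_num at h; exact h)⟩
  · exact ⟨8, by norm_num, (by have h := (hcl 4 ha 4 ha); norm_num at h; exact h), (by have h := (hcl 4 ha 5 hzo); norm_num at h; exact h), (by have h := (hcl 5 hzo 5 hzo); norm_num at h; exact h)⟩
  · exact ⟨4, by norm_num, ha, hzo, hb⟩
  · exact ⟨7, by norm_num, hb, (by have h := (hcl 4 ha 4 ha); norm_num at h; exact h), (by have h := (hcl 4 ha 5 hzo); norm_num at h; exact h)⟩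
  · exact ⟨7, by norm_num, hz3, (by have h := (hcl 4 ha 4 ha); norm_num at h; exact h), (by have h := (hcl 4 ha 5 hzo); norm_num at h; exact h)⟩
  · exact ⟨4, by norm_num, ha, hzo, hb⟩
  · exact ⟨7, by norm_num, hz3, (by have h := (hcl 4 ha 4 ha); norm_num at h; exact h), (by have h := (hcl 4 ha 5 hzo); norm_num at h; exact h)⟩
  · exact ⟨8, by norm_num, hz3, (by have h := (hcl 4 ha 5 hzo); norm_num at h; exact h), (by have h := (hcl 5 hzo 5 hzo); norm_num at h; exact h)⟩
  · exact ⟨4, by norm_num, ha, hzo, hb⟩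
  · exact ⟨7, by norm_num, hb, hz3, (by have h := (hcl 4 ha 5 hzo); norm_num at h; exact h)⟩
  · exact ⟨4, by norm_num, ha, hb, (by have h := (hcl 2 hz3 4 ha); norm_num at h; exact h)⟩
  · exact ⟨6, by norm_num, hb, hzo, (by have h := (hcl 2 hz3 6 hb); norm_num at h; exact h)⟩
  · exact ⟨6, by norm_num, (by have h := (hcl 2 hz3 4 ha); norm_num at h; exact h), hzo, (by have h := (hcl 4 ha 4 ha); norm_num at h; exact h)⟩
  · exact ⟨7, by norm_num, hzo, (by have h := (hcl 4 ha 4 ha); norm_num at h; exact h), (by have h := (hcl 4 ha 5 hb); norm_num at h; exact h)⟩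
  · exact ⟨6, by norm_num, hb, hzo, (by have h := (hcl 4 ha 4 ha); norm_num at h; exact h)⟩
  · exact ⟨14, by norm_num, (by have h := (hcl 7 hzo 7 hzo); norm_num at h; exact h), (by have h := (hcl (4 + 4) (hcl 4 ha 4 ha) 7 hzo); norm_num at h; exact h), (by have h := (hcl ((4 + 4) + 4) (hcl (4 + 4) (hcl 4 ha 4 ha) 4 ha) 4 ha); norm_num at h; exact h)⟩
  · exact ⟨7, by norm_num, hzo, (by have h := (hcl 4 ha 4 ha); norm_num at h; exact h), (by have h := (hcl 4 ha 5 hz3); norm_num at h; exact h)⟩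
  · exact ⟨4, by norm_num, ha, hz3, hb⟩
  · exact ⟨7, by norm_num, hzo, (by have h := (hcl 4 ha 4 ha); norm_num at h; exact h), (by have h := (hcl 4 ha 5 hz3); norm_num at h; exact h)⟩
  · exact ⟨7, by norm_num, hzo, (by have h := (hcl 4 ha 4 ha); norm_num at h; exact h), (by have h := (hcl 4 ha 5 hb); norm_num at h; exact h)⟩
  · exact ⟨6, by norm_num, hb, hzo, (by have h := (hcl 4 ha 4 ha); norm_num at h; exact h)⟩
  · exact ⟨14, by norm_num, (by have h := (hcl 7 hzo 7 hzo); norm_num at h; exact h), (by have h := (hcl (4 + 4) (hcl 4 ha 4 ha) 7 hzo); norm_num at h; exact h), (by have h := (hcl ((4 + 4) + 4) (hcl (4 + 4) (hcl 4 ha 4 ha) 4 ha) 4 ha); norm_num at h; exact h)⟩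
  · exact ⟨7, by norm_num, hzo, hz3, (by have h := (hcl 4 ha 5 hb); norm_num at h; exact h)⟩
  · exact ⟨6, by norm_num, hb, hzo, hz3⟩
  · exact ⟨14, by norm_num, (by have h := (hcl 7 hzo 7 hzo); norm_num at h; exact h), (by have h := (hcl 8 hz3 7 hzo); norm_num at h; exact h), (by have h := (hcl 8 hz3 8 hz3); norm_num at h; exact h)⟩
  · exact ⟨4, by norm_num, ha, hb, (by have h := (hcl 2 hz3 4 ha); norm_num at h; exact h)⟩
  · exact ⟨8, by norm_num, (by have h := (hcl 2 hz3 6 hb); norm_num at h; exact h), hzo, (by have h := (hcl 4 ha 6 hb); norm_num at h; exact h)⟩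
  · exact ⟨6, by norm_num, (by have h := (hcl 2 hz3 4 ha); norm_num at h; exact h), hb, (by have h := (hcl 4 ha 4 ha); norm_num at h; exact h)⟩
  · exact ⟨8, by norm_num, (by have h := (hcl 4 ha 4 ha); norm_num at h; exact h), hzo, (by have h := (hcl 5 hb 5 hb); norm_num at h; exact h)⟩
  · exact ⟨8, by norm_num, (by have h := (hcl 4 ha 4 ha); norm_num at h; exact h), hzo, (by have h := (hcl 4 ha 6 hb); norm_num at h; exact h)⟩
  · exact ⟨7, by norm_num, hb, (by have h := (hcl 4 ha 4 ha); norm_num at h; exact h), hzo⟩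
  · exact ⟨8, by norm_num, (by have h := (hcl 4 ha 4 ha); norm_num at h; exact h), hzo, (by have h := (hcl 5 hz3 5 hz3); norm_num at h; exact h)⟩
  · exact ⟨4, by norm_num, ha, hz3, hb⟩
  · exact ⟨7, by norm_num, hb, (by have h := (hcl 4 ha 4 ha); norm_num at h; exact h), hzo⟩
  · exact ⟨7, by norm_num, hz3, (by have h := (hcl 4 ha 4 ha); norm_num at h; exact h), hzo⟩
  · exact ⟨6, by norm_num, hb, hz3, (by have h := (hcl 4 ha 4 ha); norm_num at h; exact h)⟩
  · exact ⟨7, by norm_num, hz3, (by have h := (hcl 4 ha 4 ha); norm_num at h; exact h), hzo⟩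
  · exact ⟨8, by norm_num, hz3, hzo, (by have h := (hcl 5 hb 5 hb); norm_num at h; exact h)⟩
  · exact ⟨8, by norm_num, hz3, hzo, (by have h := (hcl 4 ha 6 hb); norm_num at h; exact h)⟩
  · exact ⟨7, by norm_num, hb, hz3, hzo⟩


variable {G : Type*} [AddCommGroup G] [Infinite G]

/-- cofinite -/
def Cof (X : Set G) : Prop := Xᶜ.Finite

lemma simEq_univ_iff (X : Set G) : SimEq X Set.univ ↔ Cof X := by
  unfold SimEq Cof
  rw [show symmDiff X Set.univ = Xᶜ from symmDiff_top X]

lemma Cof.inter {X Y : Set G} (hX : Cof X) (hY : Cof Y) : Cof (X ∩ Y) := by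
  unfold Cof at *
  rw [Set.compl_inter]
  exact hX.union hY

lemma Cof.mono {X Y : Set G} (hXY : X ⊆ Y) (hX : Cof X) : Cof Y :=
  hX.subset (Set.compl_subset_compl.mpr hXY)

lemma Cof.preimage {X : Set G} (f : G → G) (hf : Function.Injective f) (hX : Cof X) :
    Cof (f ⁻¹' X) := by
  unfold Cof at *
  rw [← Set.preimage_compl]
  exact Set.Finite.preimage (hf.injOn) hX

lemma Cof.nonempty {X : Set G} (hX : Cof X) : X.Nonempty := by
  by_contra h
  rw [Set.not_nonempty_iff_eq_empty] at h
  have : (Set.univ : Set G).Finite := by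
    simpa [h, Cof] using hX
  exact Set.infinite_univ this

lemma Infinite.interCof {X Y : Set G} (hX : X.Infinite) (hY : Cof Y) : (X ∩ Y).Nonempty := by
  have : X ∩ Y = X \ Yᶜ := by ext x; simp [Set.mem_diff]
  rw [this]
  exact (hX.diff hY).nonempty


section SumSet
variable (A : Set G)

local notation "S" => itSum A

lemma S1_eq : S 1 = A := by
  show ({0} : Set G) + A = A
  ext x
  simp [Set.mem_add]

lemma S_add (m n : ℕ) : S (m + n) = S m + S n := by
  induction n with
  | zero =>
    show S m = S m + ({0} : Set G)
    ext x
    simp [Set.mem_add]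
  | succ n ih =>
    show S (m + n) + A = S m + (S n + A)
    rw [ih, add_assoc]

variable {A}

lemma mem_sum {x y : G} {m n : ℕ} (hx : x ∈ S m) (hy : y ∈ S n) : x + y ∈ S (m + n) := by
  rw [S_add]
  exact Set.add_mem_add hx hy

lemma zadd {m n : ℕ} (hx : (0 : G) ∈ S m) (hy : (0 : G) ∈ S n) : (0 : G) ∈ S (m + n) := by
  simpa using mem_sum hx hy

lemma chain {m n : ℕ} (hz : (0 : G) ∈ S n) : S m ⊆ S (m + n) := fun x hx => by
  simpa using mem_sum hx hz

/-- U -/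
def Uset : Set G := itSum A 1 ∪ itSum A 2 ∪ itSum A 3

lemma mem_U_iff {x : G} : x ∈ (Uset (A := A)) ↔ ∃ i, 1 ≤ i ∧ i ≤ 3 ∧ x ∈ S i := by
  constructor
  · rintro ((h | h) | h)
    exacts [⟨1, by omega, by omega, h⟩, ⟨2, by omega, by omega, h⟩, ⟨3, by omega, by omega, h⟩]
  · rintro ⟨i, h1, h3, hx⟩
    interval_cases i
    exacts [Or.inl (Or.inl hx), Or.inl (Or.inr hx), Or.inr hx]

lemma A_infinite (hU : Cof (Uset (A := A))) : A.Infinite := by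
  by_contra hfin
  rw [Set.not_infinite] at hfin
  have hS : ∀ n, 1 ≤ n → (S n).Finite := by
    intro n _
    induction n with
    | zero => exact Set.finite_singleton 0
    | succ n ih =>
      have : (S n).Finite := by
        cases n with
        | zero => exact Set.finite_singleton 0
        | succ m => exact ih (by omega)
      exact this.add hfin
  have hUfin : (Uset (A := A)).Finite :=
    ((hS 1 (by omega)).union (hS 2 (by omega))).union (hS 3 (by omega))
  exact Set.infinite_univ (α := G) (by simpa using hUfin.union hU)

lemma S_infinite (hU : Cof (Uset (A := A))) {n : ℕ} (hn : 1 ≤ n) : (S n).Infinite := by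
  have hAinf := A_infinite hU
  induction n with
  | zero => omega
  | succ n ih =>
    cases n with
    | zero => rw [S1_eq]; exact hAinf
    | succ m =>
      have hinf : (S (m + 1)).Infinite := ih (by omega)
      obtain ⟨a, ha⟩ := hAinf.nonempty
      have hsub : (fun x => x + a) '' S (m + 1) ⊆ S (m + 1 + 1) := by
        rintro x ⟨y, hy, rfl⟩
        exact Set.add_mem_add hy ha
      exact Set.Infinite.mono hsub (hinf.image ((add_left_injective a).injOn))

end SumSet


section Extract
variable {A : Set G}

local notation "S" => itSum A

lemma ex_a (hU : Cof (Uset (A := A))) : ∃ a, 2 ≤ a ∧ a ≤ 4 ∧ (0:G) ∈ S a := by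
  have hnegU : Cof (Neg.neg ⁻¹' (Uset (A := A)) : Set G) :=
    hU.preimage Neg.neg neg_injective
  obtain ⟨g, hgA, hgneg⟩ := Infinite.interCof (A_infinite hU) hnegU
  obtain ⟨j, hj1, hj3, hj⟩ := mem_U_iff.mp hgneg
  refine ⟨1 + j, by omega, by omega, ?_⟩
  have hg1 : g ∈ S 1 := by rw [S1_eq]; exact hgA
  simpa using mem_sum hg1 hj

lemma ex_b (hU : Cof (Uset (A := A))) : ∃ b, 5 ≤ b ∧ b ≤ 7 ∧ (0:G) ∈ S b := by
  obtain ⟨g1, hg1⟩ := (S_infinite hU (n := 1) (by omega)).nonempty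
  have hinj : Function.Injective (fun x : G => -(g1 + x)) := by
    intro x y h
    simp only [neg_inj, add_right_inj] at h
    exact h
  have hset : Cof ((fun x : G => -(g1 + x)) ⁻¹' (Uset (A := A))) := hU.preimage _ hinj
  obtain ⟨g2, hg2S, hg2'⟩ := Infinite.interCof (S_infinite hU (n := 3) (by omega)) hset
  obtain ⟨j, hj1, hj3, hj⟩ := mem_U_iff.mp hg2'
  refine ⟨4 + j, by omega, by omega, ?_⟩
  have h4 : g1 + g2 ∈ S (1 + 3) := mem_sum hg1 hg2S
  have h5 := mem_sum h4 hj
  rw [add_neg_cancel] at h5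
  rw [show 4 + j = 1 + 3 + j by omega]
  exact h5

end Extract


section Degenerate
variable {A : Set G}

local notation "S" => itSum A

lemma degenerate (hU : Cof (Uset (A := A))) (d : ℕ) (hd2 : 2 ≤ d) (hd3 : d ≤ 3)
    (Hdvd : ∀ z, (0:G) ∈ S z → 2 ≤ z → z ≤ 9 → d ∣ z)
    (k : ℕ) (hk1 : 1 ≤ k) (hk : Cof (S k)) :
    ∃ M, 1 ≤ M ∧ M ≤ 17 ∧ Cof (S M) := by
  classical
  set U : Set G := Uset (A := A) with hUdef
  set G0 : Set G := U ∩ (Neg.neg ⁻¹' U) with hG0def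
  have hG0 : Cof G0 := hU.inter (hU.preimage Neg.neg neg_injective)
  have hG0U : ∀ x : G, x ∈ G0 → x ∈ U := fun x hx => hx.1
  -- level function
  have hlevE : ∀ x : G, ∃ i, 1 ≤ i ∧ i ≤ 3 ∧ (x ∈ U → x ∈ S i) := by
    intro x
    by_cases hx : x ∈ U
    · obtain ⟨i, h1, h3, hxi⟩ := mem_U_iff.mp hx
      exact ⟨i, h1, h3, fun _ => hxi⟩
    · exact ⟨1, le_refl 1, by omega, fun h => absurd h hx⟩
  choose lev lev1 lev3 levS using hlevE
  -- no-conflict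
  have noconf : ∀ x : G, x ∈ G0 → ∀ i j : ℕ, 1 ≤ i → i ≤ 6 → 1 ≤ j → j ≤ 6 →
      x ∈ S i → x ∈ S j → ((i : ZMod d) = (j : ZMod d)) := by
    intro x hx i j hi1 hi6 hj1 hj6 hxi hxj
    obtain ⟨l, hl1, hl3, hl⟩ := mem_U_iff.mp hx.2
    have h1 : (0:G) ∈ S (i + l) := by
      have := mem_sum hxi hl; rwa [add_neg_cancel] at this
    have h2 : (0:G) ∈ S (j + l) := by
      have := mem_sum hxj hl; rwa [add_neg_cancel] at this
    have c1 : ((i + l : ℕ) : ZMod d) = 0 :=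
      (ZMod.natCast_eq_zero_iff _ _).mpr (Hdvd _ h1 (by omega) (by omega))
    have c2 : ((j + l : ℕ) : ZMod d) = 0 :=
      (ZMod.natCast_eq_zero_iff _ _).mpr (Hdvd _ h2 (by omega) (by omega))
    push_cast at c1 c2
    have := c1.trans c2.symm
    exact add_right_cancel this
  -- additivity of level on G0
  have addrho : ∀ x y : G, x ∈ G0 → y ∈ G0 → x + y ∈ G0 →
      ((lev (x+y) : ZMod d)) = (lev x : ZMod d) + (lev y : ZMod d) := by
    intro x y hx hy hxy
    have hsum : x + y ∈ S (lev x + lev y) := mem_sum (levS x hx.1) (levS y hy.1)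
    have h := noconf (x+y) hxy (lev (x+y)) (lev x + lev y) (lev1 _)
      (by have := lev3 (x+y); omega)
      (by have := lev1 x; have := lev1 y; omega)
      (by have := lev3 x; have := lev3 y; omega)
      (levS _ hxy.1) hsum
    rw [h]; push_cast; ring
  -- selector
  have hselE : ∀ g : G, ∃ s, s ∈ G0 ∧ g + s ∈ G0 := by
    intro g
    have hc : Cof (G0 ∩ ((fun s => g + s) ⁻¹' G0)) :=
      hG0.inter (hG0.preimage _ (add_right_injective g))
    obtain ⟨s, hs1, hs2⟩ := hc.nonempty
    exact ⟨s, hs1, hs2⟩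
  choose sel sel1 sel2 using hselE
  set c : G → ZMod d := fun g => (lev (g + sel g) : ZMod d) - (lev (sel g) : ZMod d) with hcdef
  -- independence of choice
  have indep : ∀ g s s' : G, s ∈ G0 → g + s ∈ G0 → s' ∈ G0 → g + s' ∈ G0 →
      ((lev (g+s) : ZMod d) - (lev s : ZMod d)
        = (lev (g+s') : ZMod d) - (lev s' : ZMod d)) := by
    intro g s s' hs hgs hs' hgs'
    have hc : Cof (G0 ∩ (((fun u => s + u) ⁻¹' G0) ∩ (((fun u => s' + u) ⁻¹' G0)
        ∩ ((fun u => (g + s + s') + u) ⁻¹' G0)))) :=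
      hG0.inter ((hG0.preimage _ (add_right_injective s)).inter
        ((hG0.preimage _ (add_right_injective s')).inter
          (hG0.preimage _ (add_right_injective (g + s + s')))))
    obtain ⟨u, hu0, hsu, hs'u, hgssu⟩ := hc.nonempty
    have key : (g+s) + (s'+u) = (g+s') + (s+u) := by abel
    have e1 : ((lev ((g+s) + (s'+u)) : ZMod d))
        = (lev (g+s) : ZMod d) + (lev (s'+u) : ZMod d) := by
      refine addrho _ _ hgs hs'u ?_
      have : (g+s) + (s'+u) = (g + s + s') + u := by abel
      rw [this]; exact hgssu
    have e2 : ((lev (s'+u) : ZMod d)) = (lev s' : ZMod d) + (lev u : ZMod d) :=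
      addrho _ _ hs' hu0 hs'u
    have f1 : ((lev ((g+s') + (s+u)) : ZMod d))
        = (lev (g+s') : ZMod d) + (lev (s+u) : ZMod d) := by
      refine addrho _ _ hgs' hsu ?_
      have : (g+s') + (s+u) = (g + s + s') + u := by abel
      rw [this]; exact hgssu
    have f2 : ((lev (s+u) : ZMod d)) = (lev s : ZMod d) + (lev u : ZMod d) :=
      addrho _ _ hs hu0 hsu
    have E : (lev (g+s) : ZMod d) + ((lev s' : ZMod d) + (lev u : ZMod d))
        = (lev (g+s') : ZMod d) + ((lev s : ZMod d) + (lev u : ZMod d)) := by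
      rw [← e2, ← e1, ← f2, ← f1, key]
    linear_combination E
  have c_spec : ∀ g s : G, s ∈ G0 → g + s ∈ G0 →
      c g = (lev (g+s) : ZMod d) - (lev s : ZMod d) := by
    intro g s hs hgs
    exact indep g (sel g) s (sel1 g) (sel2 g) hs hgs
  have c_add : ∀ g h : G, c (g + h) = c g + c h := by
    intro g h
    have hc : Cof (G0 ∩ (((fun u => h + u) ⁻¹' G0) ∩ ((fun u => (g + h) + u) ⁻¹' G0))) :=
      hG0.inter ((hG0.preimage _ (add_right_injective h)).inter
        (hG0.preimage _ (add_right_injective (g + h))))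
    obtain ⟨u, hu0, hhu, hghu⟩ := hc.nonempty
    have h1 : c (g + h) = (lev (g + h + u) : ZMod d) - (lev u : ZMod d) :=
      c_spec (g+h) u hu0 hghu
    have h2 : c g = (lev (g + (h + u)) : ZMod d) - (lev (h + u) : ZMod d) := by
      refine c_spec g (h+u) hhu ?_
      rw [← add_assoc]; exact hghu
    have h3 : c h = (lev (h + u) : ZMod d) - (lev u : ZMod d) :=
      c_spec h u hu0 hhu
    rw [h1, h2, h3, ← add_assoc]
    ring
  have c_G0 : ∀ x : G, x ∈ G0 → c x = (lev x : ZMod d) := by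
    intro x hx
    have h1 : c x = (lev (x + sel x) : ZMod d) - (lev (sel x) : ZMod d) := rfl
    rw [h1, addrho x (sel x) hx (sel1 x) (sel2 x)]
    ring
  have c_zero : c 0 = 0 := by
    have h := c_add 0 0
    rw [add_zero] at h
    have h2 : c 0 + (0 : ZMod d) = c 0 + c 0 := by rw [add_zero]; exact h
    exact (add_left_cancel h2).symm
  have c_S : ∀ m (g : G), g ∈ S m → (∀ a ∈ A, c a = 1) → c g = (m : ZMod d) := by
    intro m
    induction m with
    | zero =>
      intro g hg _
      have hg0 : g = 0 := hg
      rw [hg0, c_zero]; simp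
    | succ n ih =>
      intro g hg hA1
      obtain ⟨x, hx, a, ha, rfl⟩ := hg
      rw [c_add, ih x hx hA1, hA1 a ha]
      push_cast; ring
  -- exceptional element a0
  have exists_a0 : ∃ a0 ∈ A, c a0 ≠ 1 := by
    by_contra hno
    push_neg at hno
    obtain ⟨j, hj1, hj3, hjr⟩ : ∃ j : ℕ, 1 ≤ j ∧ j ≤ 3 ∧ (j : ZMod d) = (k : ZMod d) + 1 := by
      rcases (by omega : d = 2 ∨ d = 3) with rfl | rfl
      · rcases (by decide : ∀ r : ZMod 2, r = 0 ∨ r = 1) ((k : ZMod 2) + 1) with h | h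
        · exact ⟨2, by omega, by omega, by rw [h]; exact_mod_cast ZMod.natCast_self 2⟩
        · exact ⟨1, by omega, by omega, by rw [h]; exact Nat.cast_one⟩
      · rcases (by decide : ∀ r : ZMod 3, r = 0 ∨ r = 1 ∨ r = 2) ((k : ZMod 3) + 1) with h | h | h
        · exact ⟨3, by omega, by omega, by rw [h]; exact_mod_cast ZMod.natCast_self 3⟩
        · exact ⟨1, by omega, by omega, by rw [h]; exact Nat.cast_one⟩
        · exact ⟨2, by omega, by omega, by rw [h]; exact_mod_cast Nat.cast_ofNat⟩
    obtain ⟨x, hxj, hx0, hxk⟩ : ∃ x, x ∈ S j ∧ x ∈ G0 ∧ x ∈ S k := by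
      obtain ⟨x, h1, h2, h3⟩ := Infinite.interCof (S_infinite hU hj1) (hG0.inter hk)
      exact ⟨x, h1, h2, h3⟩
    have e1 : c x = (k : ZMod d) := c_S k x hxk hno
    have e2 : c x = (lev x : ZMod d) := c_G0 x hx0
    have e3 : ((lev x : ℕ) : ZMod d) = (j : ZMod d) :=
      noconf x hx0 (lev x) j (lev1 x) (by have := lev3 x; omega) (by omega) (by omega)
        (levS x hx0.1) hxj
    have hcontra : (k : ZMod d) + (0 : ZMod d) = (k : ZMod d) + 1 := by
      rw [add_zero, ← hjr, ← e3, ← e2, e1]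
    have h01 : ((1:ℕ) : ZMod d) = 0 := by
      have := (add_left_cancel hcontra).symm
      exact_mod_cast this
    rw [ZMod.natCast_eq_zero_iff] at h01
    have := Nat.le_of_dvd one_pos h01
    omega
  obtain ⟨a0, ha0A, ha0⟩ := exists_a0
  have ha0S : a0 ∈ S 1 := by rw [S1_eq]; exact ha0A
  have cstep : ∀ x : G, c x = c (x - a0) + c a0 := by
    intro x
    rw [← c_add, sub_add_cancel]
  -- small zero-sums
  obtain ⟨a, ha2, ha4, haZ⟩ := ex_a hU
  obtain ⟨b, hb5, hb7, hbZ⟩ := ex_b hU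
  rcases (by omega : d = 2 ∨ d = 3) with rfl | rfl
  · -- d = 2, target M = 16
    have ha' : a = 2 ∨ a = 4 := by have := Hdvd a haZ (by omega) (by omega); omega
    have hb' : b = 6 := by have := Hdvd b hbZ (by omega) (by omega); omega
    subst hb'
    have z12 : (0:G) ∈ S 12 := by
      have := zadd hbZ hbZ; norm_num at this; exact this
    have z14 : (0:G) ∈ S 14 := by
      rcases ha' with rfl | rfl
      · have := zadd haZ z12; norm_num at this; exact this
      · have := zadd haZ (zadd haZ hbZ); norm_num at this; exact this
    have hr0 : c a0 = 0 := by
      rcases (by decide : ∀ r : ZMod 2, r = 0 ∨ r = 1) (c a0) with h | h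
      exacts [h, absurd h ha0]
    refine ⟨16, by omega, by omega, ?_⟩
    have hW : Cof (G0 ∩ ((fun x => x - a0) ⁻¹' G0)) :=
      hG0.inter (hG0.preimage _ sub_left_injective)
    refine Cof.mono ?_ hW
    rintro x ⟨hx0, hxs⟩
    have hx1 := lev1 x
    have hx3 := lev3 x
    have hxS := levS x hx0.1
    have hxc : c x = (lev x : ZMod 2) := c_G0 x hx0
    have hyc : c (x - a0) = (lev (x - a0) : ZMod 2) := c_G0 _ hxs
    have hcast : ((lev (x - a0) : ℕ) : ZMod 2) = ((lev x : ℕ) : ZMod 2) := by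
      rw [← hyc, ← hxc, cstep x, hr0, add_zero]
    have hy1 := lev1 (x - a0)
    have hy3 := lev3 (x - a0)
    have hyS : x - a0 ∈ S (lev (x - a0)) := levS _ hxs.1
    rcases (by omega : lev x = 1 ∨ lev x = 2 ∨ lev x = 3) with hl | hl | hl
    · -- lev x odd: use x - a0
      rw [hl] at hcast
      have hym : lev (x - a0) = 1 ∨ lev (x - a0) = 3 := by
        rcases (by omega : lev (x - a0) = 1 ∨ lev (x - a0) = 2 ∨ lev (x - a0) = 3)
          with h | h | h
        · exact Or.inl h
        · rw [h] at hcast; exact absurd hcast (by decide)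
        · exact Or.inr h
      have hy15 : x - a0 ∈ S 15 := by
        rcases hym with h | h
        · rw [h] at hyS
          have := chain z14 hyS; rwa [show (1:ℕ) + 14 = 15 by omega] at this
        · rw [h] at hyS
          have := chain z12 hyS; rwa [show (3:ℕ) + 12 = 15 by omega] at this
      have := mem_sum hy15 ha0S
      rwa [sub_add_cancel, show (15:ℕ) + 1 = 16 by omega] at this
    · rw [hl] at hxS
      have := chain z14 hxS
      rwa [show (2:ℕ) + 14 = 16 by omega] at this
    · -- lev x = 3 : odd, same as first case
      rw [hl] at hcast
      have hym : lev (x - a0) = 1 ∨ lev (x - a0) = 3 := by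
        rcases (by omega : lev (x - a0) = 1 ∨ lev (x - a0) = 2 ∨ lev (x - a0) = 3)
          with h | h | h
        · exact Or.inl h
        · rw [h] at hcast; exact absurd hcast (by decide)
        · exact Or.inr h
      have hy15 : x - a0 ∈ S 15 := by
        rcases hym with h | h
        · rw [h] at hyS
          have := chain z14 hyS; rwa [show (1:ℕ) + 14 = 15 by omega] at this
        · rw [h] at hyS
          have := chain z12 hyS; rwa [show (3:ℕ) + 12 = 15 by omega] at this
      have := mem_sum hy15 ha0S
      rwa [sub_add_cancel, show (15:ℕ) + 1 = 16 by omega] at this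
  · -- d = 3, target M = 7
    have ha' : a = 3 := by have := Hdvd a haZ (by omega) (by omega); omega
    subst ha'
    have z3 : (0:G) ∈ S 3 := haZ
    have z6 : (0:G) ∈ S 6 := by
      have := zadd z3 z3; norm_num at this; exact this
    have hr : c a0 = 0 ∨ c a0 = 2 :=
      (by decide : ∀ r : ZMod 3, r ≠ 1 → r = 0 ∨ r = 2) (c a0) ha0
    refine ⟨7, by omega, by omega, ?_⟩
    have hW : Cof ((G0 ∩ ((fun x => x - a0) ⁻¹' G0)) ∩ ((fun x => x - a0 - a0) ⁻¹' G0)) :=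
      (hG0.inter (hG0.preimage _ sub_left_injective)).inter
        (hG0.preimage _ (sub_left_injective.comp sub_left_injective))
    refine Cof.mono ?_ hW
    rintro x ⟨⟨hx0, hy1G⟩, hy2G⟩
    have hxS := levS x hx0.1
    have hy1S : x - a0 ∈ S (lev (x - a0)) := levS _ hy1G.1
    have hy2S : x - a0 - a0 ∈ S (lev (x - a0 - a0)) := levS _ hy2G.1
    have hxc : c x = (lev x : ZMod 3) := c_G0 x hx0
    have hy1c : c (x - a0) = (lev (x - a0) : ZMod 3) := c_G0 _ hy1G
    have hy2c : c (x - a0 - a0) = (lev (x - a0 - a0) : ZMod 3) := c_G0 _ hy2G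
    have e1 : ((lev x : ℕ) : ZMod 3) = ((lev (x - a0) : ℕ) : ZMod 3) + c a0 := by
      rw [← hxc, ← hy1c, cstep x]
    have e2 : ((lev (x - a0) : ℕ) : ZMod 3)
        = ((lev (x - a0 - a0) : ℕ) : ZMod 3) + c a0 := by
      rw [← hy1c, ← hy2c, cstep (x - a0)]
    -- helper to conclude x ∈ S 7 from x - u•a0 ∈ S m with m + u ∈ {1,4}
    have mem4 : ∀ y : G, y ∈ S 4 → y ∈ S 7 := by
      intro y hy
      have := chain z3 hy; rwa [show (4:ℕ) + 3 = 7 by omega] at this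
    have mem1 : ∀ y : G, y ∈ S 1 → y ∈ S 7 := by
      intro y hy
      have := chain z6 hy; rwa [show (1:ℕ) + 6 = 7 by omega] at this
    have step1 : ∀ y : G, y ∈ S 3 → y + a0 ∈ S 4 := by
      intro y hy
      have := mem_sum hy ha0S; rwa [show (3:ℕ) + 1 = 4 by omega] at this
    have step2 : ∀ y : G, y ∈ S 2 → y + a0 + a0 ∈ S 4 := by
      intro y hy
      have h1 := mem_sum hy ha0S
      have h2 := mem_sum h1 ha0S
      rwa [show (2:ℕ) + 1 + 1 = 4 by omega] at h2
    have hx1 := lev1 x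
    have hx3 := lev3 x
    have hy11 := lev1 (x - a0)
    have hy13 := lev3 (x - a0)
    have hy21 := lev1 (x - a0 - a0)
    have hy23 := lev3 (x - a0 - a0)
    rcases (by omega : lev x = 1 ∨ lev x = 2 ∨ lev x = 3) with hl | hl | hl
    · rw [hl] at hxS; exact mem1 x hxS
    all_goals (
      rcases hr with hr' | hr' <;>
      rw [hl, hr'] at e1 <;>
      rw [hr'] at e2 <;>
      rcases (by omega : lev (x - a0) = 1 ∨ lev (x - a0) = 2 ∨ lev (x - a0) = 3)
        with h1 | h1 | h1 <;>
      rcases (by omega : lev (x - a0 - a0) = 1 ∨ lev (x - a0 - a0) = 2 ∨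
          lev (x - a0 - a0) = 3) with h2 | h2 | h2 <;>
      rw [h1] at e1 e2 hy1S <;>
      rw [h2] at e2 hy2S <;>
      first
      | exact absurd e1 (by decide)
      | exact absurd e2 (by decide)
      | (have h4 := step1 _ hy1S
         rw [sub_add_cancel] at h4
         exact mem4 x h4)
      | (have h4 := step2 _ hy2S
         rw [sub_add_cancel, sub_add_cancel] at h4
         exact mem4 x h4))

end Degenerate

end Stmt19

theorem stmt_19 {G : Type*} [AddCommGroup G] [Infinite G] (A : Set G)
    (hA : SimEq (itSum A 1 ∪ itSum A 2 ∪ itSum A 3) Set.univ)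
    (hbasis : ∃ k, 1 ≤ k ∧ SimEq (itSum A k) Set.univ) :
    ∃ k, 1 ≤ k ∧ k ≤ 17 ∧ SimEq (itSum A k) Set.univ := by
  classical
  have hA' : SimEq (Stmt19.Uset (A := A)) Set.univ := hA
  have hU : Stmt19.Cof (Stmt19.Uset (A := A)) := (Stmt19.simEq_univ_iff _).mp hA'
  obtain ⟨k, hk1, hkS⟩ := hbasis
  have hk : Stmt19.Cof (itSum A k) := (Stmt19.simEq_univ_iff _).mp hkS
  by_cases hD3 : ∃ z, (0:G) ∈ itSum A z ∧ 2 ≤ z ∧ z ≤ 9 ∧ ¬ (3 ∣ z)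
  · by_cases hD2 : ∃ z, (0:G) ∈ itSum A z ∧ 2 ≤ z ∧ z ≤ 9 ∧ z % 2 = 1
    · obtain ⟨z3, hz3S, hz32, hz39, hz33⟩ := hD3
      obtain ⟨zo, hzoS, hzo2, hzo9, hzoo⟩ := hD2
      obtain ⟨a, ha2, ha4, haZ⟩ := Stmt19.ex_a hU
      obtain ⟨b, hb5, hb7, hbZ⟩ := Stmt19.ex_b hU
      have hcl : ∀ x ∈ {n : ℕ | (0:G) ∈ itSum A n}, ∀ y ∈ {n : ℕ | (0:G) ∈ itSum A n},
          x + y ∈ {n : ℕ | (0:G) ∈ itSum A n} := fun x hx y hy => Stmt19.zadd hx hy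
      obtain ⟨t, ht14, ht0, ht1, ht2⟩ :=
        Stmt19.rich hcl haZ ha2 ha4 hbZ hb5 hb7 hzoS hzo2 hzo9 hzoo hz3S hz32 hz39 hz33
      refine ⟨t + 3, by omega, by omega, (Stmt19.simEq_univ_iff _).mpr ?_⟩
      refine Stmt19.Cof.mono ?_ hU
      intro x hx
      obtain ⟨i, hi1, hi3, hxi⟩ := Stmt19.mem_U_iff.mp hx
      interval_cases i
      · have := Stmt19.chain ht2 hxi
        rwa [show 1 + (t + 2) = t + 3 by omega] at this
      · have := Stmt19.chain ht1 hxi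
        rwa [show 2 + (t + 1) = t + 3 by omega] at this
      · have := Stmt19.chain ht0 hxi
        rwa [show 3 + t = t + 3 by omega] at this
    · push_neg at hD2
      have Hdvd : ∀ z, (0:G) ∈ itSum A z → 2 ≤ z → z ≤ 9 → 2 ∣ z := by
        intro z h1 h2 h3
        have := hD2 z h1 h2 h3
        omega
      obtain ⟨M, hM1, hM17, hM⟩ := Stmt19.degenerate hU 2 (by omega) (by omega) Hdvd k hk1 hk
      exact ⟨M, hM1, hM17, (Stmt19.simEq_univ_iff _).mpr hM⟩
  · push_neg at hD3
    obtain ⟨M, hM1, hM17, hM⟩ := Stmt19.degenerate hU 3 (by omega) (by omega) hD3 k hk1 hk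
    exact ⟨M, hM1, hM17, (Stmt19.simEq_univ_iff _).mpr hM⟩
end
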